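/- arXiv:2106.00091 — 10 statements merged into one kernel-verified Lean document; each statement's English description precedes it below -/
import Mathlib

section
/- For a uniformly random k-element subset T of {1,...,m}, the expected value of the sum of the s smallest elements of T equals s(s+1)/2 · (m+1)/(k+1), for any 1 ≤ s ≤ k ≤ m. -/
private lemma sort_insert_max {a : ℕ} {T : Finset ℕ} (ha : a ∉ T) (h : ∀ b ∈ T, b ≤ a) :
    (insert a T).sort (· ≤ ·) = T.sort (· ≤ ·) ++ [a] := by
  refine (fun hp h1 h2 => List.Perm.eq_of_pairwise' h1 h2 hp) ?_ (Finset.pairwise_sort _ _) ?_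
  · refine ((Finset.sort_perm_toList _ _).trans (Finset.toList_insert ha)).trans ?_
    exact ((Finset.sort_perm_toList T _).symm.cons a).trans
      (List.perm_append_singleton a _).symm
  · rw [List.pairwise_append]
    refine ⟨Finset.pairwise_sort _ _, List.pairwise_singleton _ _, fun x hx b hb => ?_⟩
    rw [List.mem_singleton] at hb
    subst hb
    exact h x ((Finset.mem_sort _).1 hx)

private lemma sum_sort_eq (T : Finset ℕ) : (T.sort (· ≤ ·)).sum = ∑ x ∈ T, x := by
  rw [List.Perm.sum_eq (Finset.sort_perm_toList T _)]
  simpa using Finset.sum_map_toList T id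

private lemma key : ∀ m s k : ℕ, 1 ≤ s → s ≤ k →
    2 * ∑ T ∈ (Finset.Icc 1 m).powersetCard k, ((T.sort (· ≤ ·)).take s).sum
      = s * (s + 1) * Nat.choose (m + 1) (k + 1) := by
  intro m
  induction m with
  | zero =>
    intro s k hs hsk
    obtain ⟨k', rfl⟩ : ∃ k', k = k' + 1 := ⟨k - 1, by omega⟩
    have h0 : Finset.Icc 1 0 = (∅ : Finset ℕ) := by simp
    rw [h0]
    simp [Nat.choose_eq_zero_of_lt (show 1 < k' + 2 by omega)]
  | succ m ih =>
    intro s k hs hsk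
    obtain ⟨k', rfl⟩ : ∃ k', k = k' + 1 := ⟨k - 1, by omega⟩
    have hins : Finset.Icc 1 (m + 1) = insert (m + 1) (Finset.Icc 1 m) := by
      ext x; simp only [Finset.mem_Icc, Finset.mem_insert]; omega
    have hnm : (m + 1) ∉ Finset.Icc 1 m := by simp
    have hdisj : Disjoint ((Finset.Icc 1 m).powersetCard (k' + 1))
        (((Finset.Icc 1 m).powersetCard k').image (insert (m + 1))) := by
      rw [Finset.disjoint_left]
      intro A hA hA'
      obtain ⟨B, _, rfl⟩ := Finset.mem_image.1 hA'
      exact hnm ((Finset.mem_powersetCard.1 hA).1 (Finset.mem_insert_self _ _))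
    have hinj : ∀ B₁ ∈ (Finset.Icc 1 m).powersetCard k', ∀ B₂ ∈ (Finset.Icc 1 m).powersetCard k',
        insert (m + 1) B₁ = insert (m + 1) B₂ → B₁ = B₂ := by
      intro B₁ h₁ B₂ h₂ hE
      have h₁' : (m + 1) ∉ B₁ := fun hc => hnm ((Finset.mem_powersetCard.1 h₁).1 hc)
      have h₂' : (m + 1) ∉ B₂ := fun hc => hnm ((Finset.mem_powersetCard.1 h₂).1 hc)
      rw [← Finset.erase_insert h₁', hE, Finset.erase_insert h₂']
    have hsort : ∀ B ∈ (Finset.Icc 1 m).powersetCard k',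
        (insert (m + 1) B).sort (· ≤ ·) = B.sort (· ≤ ·) ++ [m + 1] := by
      intro B hB
      have hB' := Finset.mem_powersetCard.1 hB
      exact sort_insert_max (fun hc => hnm (hB'.1 hc))
        (fun b hb => by have := Finset.mem_Icc.1 (hB'.1 hb); omega)
    have hlen : ∀ B ∈ (Finset.Icc 1 m).powersetCard k',
        (B.sort (· ≤ ·)).length = k' := by
      intro B hB
      rw [Finset.length_sort, (Finset.mem_powersetCard.1 hB).2]
    rw [hins, Finset.powersetCard_succ_insert hnm, Finset.sum_union hdisj,
      Finset.sum_image hinj]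
    rcases eq_or_lt_of_le hsk with heq | hlt
    · -- s = k' + 1
      subst heq
      have hsum2 : (∑ B ∈ (Finset.Icc 1 m).powersetCard k',
          (((insert (m + 1) B).sort (· ≤ ·)).take (k' + 1)).sum)
          = ∑ B ∈ (Finset.Icc 1 m).powersetCard k', ((∑ x ∈ B, x) + (m + 1)) := by
        refine Finset.sum_congr rfl fun B hB => ?_
        rw [hsort B hB, List.take_of_length_le (by simp [hlen B hB]), List.sum_append,
          sum_sort_eq]
        simp
      have hcard : ((Finset.Icc 1 m).powersetCard k').card = Nat.choose m k' := by
        rw [Finset.card_powersetCard, Nat.card_Icc, Nat.add_sub_cancel]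
      have h2 : 2 * ∑ B ∈ (Finset.Icc 1 m).powersetCard k', (∑ x ∈ B, x)
          = k' * (k' + 1) * Nat.choose (m + 1) (k' + 1) := by
        cases k' with
        | zero => simp
        | succ j =>
          have hconv : ∑ B ∈ (Finset.Icc 1 m).powersetCard (j + 1), (∑ x ∈ B, x)
              = ∑ B ∈ (Finset.Icc 1 m).powersetCard (j + 1),
                  ((B.sort (· ≤ ·)).take (j + 1)).sum := by
            refine Finset.sum_congr rfl fun B hB => ?_
            rw [List.take_of_length_le (le_of_eq (hlen B hB)), sum_sort_eq]
          rw [hconv]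
          exact ih (j + 1) (j + 1) (by omega) le_rfl
      have h1 := ih (k' + 1) (k' + 1) (by omega) le_rfl
      have h3 := Nat.add_one_mul_choose_eq m k'
      have hp : Nat.choose (m + 1 + 1) (k' + 1 + 1)
          = Nat.choose (m + 1) (k' + 1) + Nat.choose (m + 1) (k' + 1 + 1) :=
        Nat.choose_succ_succ _ _
      rw [hsum2, Finset.sum_add_distrib, Finset.sum_const, smul_eq_mul, hcard, hp]
      zify at h1 h2 h3 ⊢
      linear_combination h1 + h2 + 2 * h3
    · -- s ≤ k'
      have hsk' : s ≤ k' := by omega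
      have hsum2 : ∑ B ∈ (Finset.Icc 1 m).powersetCard k',
          (((insert (m + 1) B).sort (· ≤ ·)).take s).sum
          = ∑ B ∈ (Finset.Icc 1 m).powersetCard k', ((B.sort (· ≤ ·)).take s).sum := by
        refine Finset.sum_congr rfl fun B hB => ?_
        rw [hsort B hB, List.take_append_of_le_length (by rw [hlen B hB]; omega)]
      rw [hsum2, Nat.mul_add, ih s (k' + 1) hs hsk, ih s k' hs hsk',
        Nat.choose_succ_succ (m + 1) (k' + 1)]
      ring

/-- For a uniformly random `k`-element subset `T` of `{1,...,m}`, the expected value of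
the sum of the `s` smallest elements of `T` equals `s(s+1)/2 * (m+1)/(k+1)`, for
`1 ≤ s ≤ k ≤ m`. Expectation is expressed as the average over all `k`-subsets. -/
theorem expected_sum_smallest (m k s : ℕ) (hs : 1 ≤ s) (hsk : s ≤ k) (hkm : k ≤ m) :
    (∑ T ∈ (Finset.Icc 1 m).powersetCard k,
        ((((T.sort (· ≤ ·)).take s).sum : ℚ))) / (Nat.choose m k : ℚ)
      = (s * (s + 1) / 2) * ((m + 1) / (k + 1)) := by
  have hkey := key m s k hs hsk
  have h3 := Nat.add_one_mul_choose_eq m k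
  have hc : (Nat.choose m k : ℚ) ≠ 0 := by
    exact_mod_cast (Nat.choose_pos hkm).ne'
  have hk1 : ((k : ℚ) + 1) ≠ 0 := by positivity
  have hcast : (∑ T ∈ (Finset.Icc 1 m).powersetCard k,
      ((((T.sort (· ≤ ·)).take s).sum : ℚ)))
      = ((∑ T ∈ (Finset.Icc 1 m).powersetCard k,
          ((T.sort (· ≤ ·)).take s).sum : ℕ) : ℚ) := by
    rw [Nat.cast_sum]
  rw [hcast]
  set N : ℕ := ∑ T ∈ (Finset.Icc 1 m).powersetCard k, ((T.sort (· ≤ ·)).take s).sum with hN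
  have hkeyQ : (2 : ℚ) * N = s * (s + 1) * Nat.choose (m + 1) (k + 1) := by
    exact_mod_cast hkey
  have h3Q : ((m : ℚ) + 1) * Nat.choose m k = Nat.choose (m + 1) (k + 1) * ((k : ℚ) + 1) := by
    exact_mod_cast h3
  field_simp
  linear_combination ((k : ℚ) + 1) * hkeyQ - (s : ℚ) * (s + 1) * h3Q
end

section
/- Let T_t ⊆ C with |T_t| = t be the committee after t greedy steps, and for each candidate c ∉ T_t define Δ_c = r_V(T_t) − r_V(T_t ∪ {c}), where r_V(S) = (1/n)Σ_v min_{c∈S} r_v(c). Then Σ_{c ∉ T_t} Δ_c = (1/(2n))·Σ_v r_v(T_t)(r_v(T_t) − 1). Consequently the candidate c* maximizing Δ_c satisfies Δ_{c*} ≥ (Σ_v r_v(T_t)(r_v(T_t)−1)) / (2n(m−t)). -/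
lemma aux_range (M R : ℕ) (hRM : R ≤ M) :
    ∑ k ∈ Finset.range M, (R - (k+1)) = R * (R - 1) / 2 := by
  have h1 : ∑ k ∈ Finset.range M, (R - (k+1)) = ∑ k ∈ Finset.range R, (R - (k+1)) := by
    rw [Finset.sum_subset (Finset.range_subset_range.2 hRM)]
    intro x _ hx
    simp only [Finset.mem_range, not_lt] at hx
    omega
  have h2 : ∑ k ∈ Finset.range R, (R - (k+1)) = ∑ k ∈ Finset.range R, k := by
    have := Finset.sum_range_reflect (fun j => j) R
    rw [← this]
    apply Finset.sum_congr rfl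
    intro x hx
    simp only [Finset.mem_range] at hx
    omega
  rw [h1, h2, Finset.sum_range_id]

lemma aux_voter {C : Type} [Fintype C] [DecidableEq C] (m : ℕ)
    (hm : Fintype.card C = m) (ρ : C ≃ Fin m) (T : Finset C) (hTne : T.Nonempty) :
    ∑ c ∈ Tᶜ, (T.inf' hTne (fun c' => (ρ c' : ℕ) + 1)
        - ((ρ c : ℕ) + 1)) * 2
      = T.inf' hTne (fun c' => (ρ c' : ℕ) + 1) *
          (T.inf' hTne (fun c' => (ρ c' : ℕ) + 1) - 1) := by
  set R := T.inf' hTne (fun c' => (ρ c' : ℕ) + 1) with hR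
  have hRm : R ≤ m := by
    obtain ⟨c0, hc0⟩ := hTne
    exact le_trans (Finset.inf'_le _ hc0) (Nat.succ_le_of_lt (ρ c0).isLt)
  have hzero : ∀ c ∈ T, (R - ((ρ c : ℕ) + 1)) * 2 = 0 := by
    intro c hc
    have : R ≤ (ρ c : ℕ) + 1 := Finset.inf'_le _ hc
    omega
  have hall : ∑ c ∈ Tᶜ, (R - ((ρ c : ℕ) + 1)) * 2
      = ∑ c : C, (R - ((ρ c : ℕ) + 1)) * 2 := by
    rw [← Finset.sum_add_sum_compl T]
    rw [Finset.sum_eq_zero hzero, zero_add]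
  rw [hall]
  have hbij : ∑ c : C, (R - ((ρ c : ℕ) + 1)) * 2
      = ∑ k : Fin m, (R - ((k : ℕ) + 1)) * 2 :=
    Equiv.sum_comp ρ (fun k => (R - ((k : ℕ) + 1)) * 2)
  rw [hbij, Fin.sum_univ_eq_sum_range (fun k => (R - (k + 1)) * 2),
    ← Finset.sum_mul, aux_range m R hRm]
  have : 2 ∣ R * (R - 1) := (Nat.even_mul_pred_self R).two_dvd
  omega


/-- Greedy marginal-improvement identity for 1-Borda.  `C` has `m` candidates, each voter
`v` ranks candidates via a bijection `r v : C ≃ Fin m` (rank of `c` is `(r v c) + 1 ∈ {1,...,m}`).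
For a nonempty committee `T` of size `t < m`, with `Δ c = r_V(T) − r_V(T ∪ {c})`, we have
`Σ_{c ∉ T} Δ_c = (1/(2n)) Σ_v r_v(T)(r_v(T) − 1)`, and consequently any `c*` maximizing
`Δ` over candidates outside `T` satisfies `Δ_{c*} ≥ (Σ_v r_v(T)(r_v(T)−1)) / (2n(m−t))`. -/
theorem greedy_marginal_improvement {C V : Type} [Fintype C] [Fintype V] [Nonempty V]
    [DecidableEq C]
    (m t : ℕ) (hm : Fintype.card C = m)
    (r : V → C ≃ Fin m)
    (T : Finset C) (hTcard : T.card = t) (hTne : T.Nonempty) (htm : t < m)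
    (Δ : C → ℝ)
    (hΔ : ∀ c : C, Δ c =
      (∑ v : V, ((T.inf' hTne (fun c' => (r v c' : ℕ) + 1) : ℕ) : ℝ)) / (Fintype.card V : ℝ) -
      (∑ v : V, (((insert c T).inf' (Finset.insert_nonempty c T)
          (fun c' => (r v c' : ℕ) + 1) : ℕ) : ℝ)) / (Fintype.card V : ℝ)) :
    (∑ c ∈ Tᶜ, Δ c)
      = (∑ v : V, ((T.inf' hTne (fun c' => (r v c' : ℕ) + 1) : ℕ) : ℝ) *
          (((T.inf' hTne (fun c' => (r v c' : ℕ) + 1) : ℕ) : ℝ) - 1))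
        / (2 * (Fintype.card V : ℝ)) ∧
    (∀ cstar : C, cstar ∉ T → (∀ c : C, c ∉ T → Δ c ≤ Δ cstar) →
      Δ cstar ≥ (∑ v : V, ((T.inf' hTne (fun c' => (r v c' : ℕ) + 1) : ℕ) : ℝ) *
          (((T.inf' hTne (fun c' => (r v c' : ℕ) + 1) : ℕ) : ℝ) - 1))
        / (2 * (Fintype.card V : ℝ) * ((m : ℝ) - (t : ℝ)))) := by
  classical
  have hn0 : (0:ℝ) < (Fintype.card V : ℝ) := by
    exact_mod_cast Fintype.card_pos
  set n : ℝ := (Fintype.card V : ℝ) with hn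
  set R : V → ℕ := fun v => T.inf' hTne (fun c' => (r v c' : ℕ) + 1) with hRdef
  have hR1 : ∀ v, 1 ≤ R v := by
    intro v
    exact Finset.le_inf' hTne _ (fun c _ => Nat.succ_le_succ (Nat.zero_le _))
  -- key per-voter fact, real valued
  have key : ∀ v : V, ∑ c ∈ Tᶜ, (((R v : ℝ)) -
      (((insert c T).inf' (Finset.insert_nonempty c T)
        (fun c' => (r v c' : ℕ) + 1) : ℕ) : ℝ))
      = (R v : ℝ) * ((R v : ℝ) - 1) / 2 := by
    intro v
    have hterm : ∀ c ∈ Tᶜ, ((R v : ℝ)) -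
        (((insert c T).inf' (Finset.insert_nonempty c T)
          (fun c' => (r v c' : ℕ) + 1) : ℕ) : ℝ)
        = ((R v - ((r v c : ℕ) + 1) : ℕ) : ℝ) := by
      intro c _
      have hins : (insert c T).inf' (Finset.insert_nonempty c T)
          (fun c' => (r v c' : ℕ) + 1) = min ((r v c : ℕ) + 1) (R v) := by
        rw [Finset.inf'_insert]
      rw [hins]
      rcases le_total ((r v c : ℕ) + 1) (R v) with h | h
      · rw [min_eq_left h, Nat.cast_sub h]
      · rw [min_eq_right h, Nat.sub_eq_zero_of_le h]
        simp
    rw [Finset.sum_congr rfl hterm, ← Nat.cast_sum]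
    have hnat := aux_voter m hm (r v) T hTne
    rw [← Finset.sum_mul] at hnat
    have : ((∑ c ∈ Tᶜ, (R v - ((r v c : ℕ) + 1)) : ℕ) : ℝ) * 2
        = ((R v * (R v - 1) : ℕ) : ℝ) := by exact_mod_cast congrArg Nat.cast hnat
    have hcast : ((R v * (R v - 1) : ℕ) : ℝ) = (R v : ℝ) * ((R v : ℝ) - 1) := by
      rw [Nat.cast_mul, Nat.cast_sub (hR1 v), Nat.cast_one]
    linarith
  -- first part
  have hfirst : (∑ c ∈ Tᶜ, Δ c)
      = (∑ v : V, (R v : ℝ) * ((R v : ℝ) - 1)) / (2 * n) := by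
    have hΔ' : ∀ c : C, Δ c = (∑ v : V, ((R v : ℝ) -
        (((insert c T).inf' (Finset.insert_nonempty c T)
          (fun c' => (r v c' : ℕ) + 1) : ℕ) : ℝ))) / n := by
      intro c
      rw [hΔ c, Finset.sum_sub_distrib, sub_div]
    calc ∑ c ∈ Tᶜ, Δ c
        = (∑ c ∈ Tᶜ, ∑ v : V, ((R v : ℝ) -
            (((insert c T).inf' (Finset.insert_nonempty c T)
              (fun c' => (r v c' : ℕ) + 1) : ℕ) : ℝ))) / n := by
          rw [Finset.sum_div]; exact Finset.sum_congr rfl (fun c _ => hΔ' c)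
      _ = (∑ v : V, ∑ c ∈ Tᶜ, ((R v : ℝ) -
            (((insert c T).inf' (Finset.insert_nonempty c T)
              (fun c' => (r v c' : ℕ) + 1) : ℕ) : ℝ))) / n := by
          rw [Finset.sum_comm]
      _ = (∑ v : V, (R v : ℝ) * ((R v : ℝ) - 1) / 2) / n := by
          rw [Finset.sum_congr rfl (fun v _ => key v)]
      _ = (∑ v : V, (R v : ℝ) * ((R v : ℝ) - 1)) / (2 * n) := by
          rw [← Finset.sum_div]; ring
  refine ⟨hfirst, ?_⟩
  intro cstar hcs hmax
  set S : ℝ := ∑ v : V, (R v : ℝ) * ((R v : ℝ) - 1) with hS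
  have hcard : (Tᶜ.card : ℝ) = (m : ℝ) - (t : ℝ) := by
    rw [Finset.card_compl, hTcard, hm, Nat.cast_sub (le_of_lt htm)]
  have hmt : (0:ℝ) < (m : ℝ) - (t : ℝ) := by
    have : (t:ℝ) < (m:ℝ) := by exact_mod_cast htm
    linarith
  have hle : S / (2 * n) ≤ ((m : ℝ) - (t : ℝ)) * Δ cstar := by
    rw [← hfirst, ← hcard]
    have := Finset.sum_le_card_nsmul Tᶜ Δ (Δ cstar)
      (fun c hc => hmax c (Finset.mem_compl.mp hc))
    simpa [nsmul_eq_mul] using this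
  rw [ge_iff_le, div_le_iff₀ (by positivity)]
  rw [div_le_iff₀ (by positivity)] at hle
  nlinarith [hle]
end

section
/- The greedy algorithm for the 1-Borda (Chamberlin–Courant) minimization objective, which iteratively adds the candidate minimizing the average best-rank score, produces after k steps a committee T_k with r_V(T_k) ≤ 2(m+1)/(k+1). -/
lemma sum_range_min_aux (R : ℕ) (h1 : 1 ≤ R) :
    ∀ m, R ≤ m → 2 * (∑ x ∈ Finset.range m, min (x + 1) R) + R * R = 2 * m * R + R := by
  intro m hm
  induction m, hm using Nat.le_induction with
  | base =>
      have h : ∀ x ∈ Finset.range R, min (x + 1) R = x + 1 := by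
        intro x hx; rw [Finset.mem_range] at hx; exact min_eq_left (by omega)
      rw [Finset.sum_congr rfl h]
      have h2 : ∑ x ∈ Finset.range R, (x + 1) = (∑ x ∈ Finset.range R, x) + R := by
        rw [Finset.sum_add_distrib, Finset.sum_const, Finset.card_range, smul_eq_mul, mul_one]
      rw [h2]
      have h3 := Finset.sum_range_id_mul_two R
      obtain ⟨R', rfl⟩ : ∃ R', R = R' + 1 := ⟨R - 1, by omega⟩
      rw [Nat.add_sub_cancel] at h3
      nlinarith [h3]
  | succ m hm ih =>
      rw [Finset.sum_range_succ, min_eq_right (by omega)]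
      ring_nf
      ring_nf at ih
      linarith [ih]

lemma greedy_arith (mr jr N F Q y : ℝ) (hN : 0 < N) (hFN : N ≤ F) (hyx : y * N ≤ F)
    (hA1 : 1 ≤ mr - jr) (hj : 0 ≤ jr)
    (h1' : 2 * (mr - jr) * (N * y) ≤ 2 * (mr - jr) * F + F - Q)
    (hCS : F ^ 2 ≤ N * Q)
    (hIH : (jr + 1) * F ≤ 2 * (mr + 1) * N) :
    y * (jr + 2) ≤ 2 * (mr + 1) := by
  set A : ℝ := mr - jr with hA
  have star : N * y * (2 * A * N + F - N) ≤ 2 * A * N * F := by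
    nlinarith [mul_le_mul_of_nonneg_left h1' hN.le, hCS,
      mul_nonneg (sub_nonneg.2 hFN) (sub_nonneg.2 hyx)]
  have star2 : 2 * A * F * (jr + 2) ≤ 2 * (mr + 1) * (2 * A * N + F - N) := by
    nlinarith [mul_nonneg (show (0:ℝ) ≤ jr + 1 by linarith) (sub_nonneg.2 hFN),
      mul_nonneg (show (0:ℝ) ≤ 2 * A - 1 by linarith) (sub_nonneg.2 hIH), hN.le, hN]
  have hD : (0 : ℝ) < 2 * A * N + F - N := by nlinarith
  have hND : (0 : ℝ) < N * (2 * A * N + F - N) := mul_pos hN hD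
  have hfin : y * (jr + 2) * (N * (2 * A * N + F - N))
      ≤ 2 * (mr + 1) * (N * (2 * A * N + F - N)) := by
    nlinarith [mul_le_mul_of_nonneg_right star (show (0:ℝ) ≤ jr + 2 by linarith),
      mul_le_mul_of_nonneg_right star2 hN.le]
  exact le_of_mul_le_mul_right hfin hND

/-- The greedy algorithm for the 1-Borda (Chamberlin–Courant) minimization objective:
iteratively adding the candidate minimizing the average best-rank score produces, after
`k` steps, a committee `T k` with `r_V(T k) ≤ 2(m+1)/(k+1)`. -/
theorem greedy_one_borda_bound {C V : Type} [Fintype C] [Fintype V] [Nonempty V]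
    [DecidableEq C]
    (m k : ℕ) (hm : Fintype.card C = m) (hk : 1 ≤ k) (hkm : k ≤ m)
    (r : V → C ≃ Fin m)
    (rV : Finset C → ℝ)
    (hrV : ∀ (S : Finset C) (hS : S.Nonempty),
      rV S = (∑ v : V, ((S.inf' hS (fun c => (r v c : ℕ) + 1) : ℕ) : ℝ)) / (Fintype.card V : ℝ))
    (T : ℕ → Finset C) (hT0 : T 0 = ∅)
    (hstep : ∀ j < k, ∃ c ∉ T j, T (j + 1) = insert c (T j) ∧
      ∀ c' ∉ T j, rV (insert c (T j)) ≤ rV (insert c' (T j))) :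
    rV (T k) ≤ 2 * ((m : ℝ) + 1) / ((k : ℝ) + 1) := by
  classical
  have hρ1 : ∀ (v : V) (c : C), 1 ≤ (r v c : ℕ) + 1 := fun v c => by omega
  have hρm : ∀ (v : V) (c : C), (r v c : ℕ) + 1 ≤ m := fun v c => by
    have := (r v c).isLt; omega
  have hNnat : 0 < Fintype.card V := Fintype.card_pos
  have hNpos : (0 : ℝ) < (Fintype.card V : ℝ) := by exact_mod_cast hNnat
  have hcard : ∀ j, j ≤ k → (T j).card = j := by
    intro j
    induction j with
    | zero => intro _; simp [hT0]
    | succ j ih =>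
        intro hj
        obtain ⟨c, hc, hTeq, -⟩ := hstep j (by omega)
        rw [hTeq, Finset.card_insert_of_notMem hc, ih (by omega)]
  have hne : ∀ j, 1 ≤ j → j ≤ k → (T j).Nonempty := by
    intro j h1 h2
    rw [← Finset.card_pos, hcard j h2]; omega
  have hsum_univ : ∀ (v : V) (R : ℕ), 1 ≤ R → R ≤ m →
      2 * (∑ c, min ((r v c : ℕ) + 1) R) + R * R = 2 * m * R + R := by
    intro v R h1 h2
    have e1 : ∑ c, min ((r v c : ℕ) + 1) R = ∑ i : Fin m, min ((i : ℕ) + 1) R :=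
      Fintype.sum_equiv (r v) _ _ (fun c => rfl)
    rw [e1, Fin.sum_univ_eq_sum_range (fun x => min (x + 1) R) m]
    exact sum_range_min_aux R h1 m h2
  -- the main induction
  have main : ∀ j, 1 ≤ j → j ≤ k → rV (T j) ≤ 2 * ((m : ℝ) + 1) / ((j : ℝ) + 1) := by
    intro j h1
    induction j, h1 using Nat.le_induction with
    | base =>
        intro h1k
        have hS := hne 1 le_rfl h1k
        have hb : rV (T 1) ≤ (m : ℝ) := by
          rw [hrV (T 1) hS, div_le_iff₀ hNpos]
          calc (∑ v : V, (((T 1).inf' hS (fun c => (r v c : ℕ) + 1) : ℕ) : ℝ))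
              ≤ ∑ _v : V, (m : ℝ) := by
                apply Finset.sum_le_sum
                intro v _
                obtain ⟨c0, hc0⟩ := hS
                have := (Finset.inf'_le (fun c => (r v c : ℕ) + 1) hc0).trans (hρm v c0)
                exact_mod_cast this
            _ = (m : ℝ) * (Fintype.card V : ℝ) := by
                rw [Finset.sum_const, Finset.card_univ, nsmul_eq_mul, mul_comm]
        have heq : 2 * ((m : ℝ) + 1) / (((1 : ℕ) : ℝ) + 1) = (m : ℝ) + 1 := by
          norm_num
        rw [heq]
        linarith
    | succ j hj ih =>
        intro hjk
        have hjk' : j ≤ k := by omega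
        have hS := hne j hj hjk'
        obtain ⟨c, hc, hTeq, hmin⟩ := hstep j (by omega)
        have hcardS : (T j).card = j := hcard j hjk'
        have hjm : j + 1 ≤ m := by omega
        -- the rank function
        set R : V → ℕ := fun v => (T j).inf' hS (fun c => (r v c : ℕ) + 1) with hRdef
        have hR1 : ∀ v, 1 ≤ R v := by
          intro v; apply Finset.le_inf'; intro b _; exact hρ1 v b
        have hRm : ∀ v, R v ≤ m := by
          intro v
          obtain ⟨c0, hc0⟩ := hS
          exact (Finset.inf'_le _ hc0).trans (hρm v c0)
        -- per-voter identity on the complement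
        have hkey : ∀ v : V,
            2 * (∑ c' ∈ (T j)ᶜ, min ((r v c' : ℕ) + 1) (R v)) + R v * R v + 2 * j * R v
              = 2 * m * R v + R v := by
          intro v
          have hsplit := Finset.sum_add_sum_compl (T j)
            (fun c' => min ((r v c' : ℕ) + 1) (R v))
          have hinS : ∑ c' ∈ T j, min ((r v c' : ℕ) + 1) (R v) = j * R v := by
            rw [Finset.sum_congr rfl (fun c' hc' => min_eq_right (Finset.inf'_le _ hc')),
              Finset.sum_const, hcardS, smul_eq_mul]
          have huniv := hsum_univ v (R v) (hR1 v) (hRm v)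
          rw [← hsplit, hinS] at huniv
          linarith [huniv]
        -- real quantities
        have hFQ : ∀ v : V, 2 * (∑ c' ∈ (T j)ᶜ, ((min ((r v c' : ℕ) + 1) (R v) : ℕ) : ℝ))
            + ((R v : ℝ)) * (R v : ℝ) + 2 * (j : ℝ) * (R v : ℝ)
              = 2 * (m : ℝ) * (R v : ℝ) + (R v : ℝ) := by
          intro v
          exact_mod_cast hkey v
        have hsumkey : 2 * (∑ v : V, ∑ c' ∈ (T j)ᶜ, ((min ((r v c' : ℕ) + 1) (R v) : ℕ) : ℝ))
            + (∑ v : V, ((R v : ℝ)) * (R v : ℝ)) + 2 * (j : ℝ) * (∑ v : V, (R v : ℝ))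
              = 2 * (m : ℝ) * (∑ v : V, (R v : ℝ)) + (∑ v : V, (R v : ℝ)) := by
          calc 2 * (∑ v : V, ∑ c' ∈ (T j)ᶜ, ((min ((r v c' : ℕ) + 1) (R v) : ℕ) : ℝ))
                + (∑ v : V, ((R v : ℝ)) * (R v : ℝ)) + 2 * (j : ℝ) * (∑ v : V, (R v : ℝ))
              = ∑ v : V, (2 * (∑ c' ∈ (T j)ᶜ, ((min ((r v c' : ℕ) + 1) (R v) : ℕ) : ℝ))
                + ((R v : ℝ)) * (R v : ℝ) + 2 * (j : ℝ) * (R v : ℝ)) := by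
                rw [Finset.sum_add_distrib, Finset.sum_add_distrib, ← Finset.mul_sum,
                  ← Finset.mul_sum]
            _ = ∑ v : V, (2 * (m : ℝ) * (R v : ℝ) + (R v : ℝ)) :=
                Finset.sum_congr rfl (fun v _ => hFQ v)
            _ = ∑ v : V, (2 * (m : ℝ) * (R v : ℝ)) + ∑ v : V, (R v : ℝ) :=
                Finset.sum_add_distrib
            _ = 2 * (m : ℝ) * (∑ v : V, (R v : ℝ)) + ∑ v : V, (R v : ℝ) := by
                rw [← Finset.mul_sum]
        -- greedy choice bound
        have hchoice : ∀ c' ∈ (T j)ᶜ,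
            (Fintype.card V : ℝ) * rV (T (j + 1))
              ≤ ∑ v : V, ((min ((r v c' : ℕ) + 1) (R v) : ℕ) : ℝ) := by
          intro c' hc'
          have hc'S : c' ∉ T j := Finset.mem_compl.mp hc'
          have h1 : rV (T (j + 1)) ≤ rV (insert c' (T j)) := by
            rw [hTeq]; exact hmin c' hc'S
          have h2 : rV (insert c' (T j))
              = (∑ v : V, ((min ((r v c' : ℕ) + 1) (R v) : ℕ) : ℝ)) / (Fintype.card V : ℝ) := by
            rw [hrV (insert c' (T j)) (Finset.insert_nonempty c' (T j))]
            congr 1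
            apply Finset.sum_congr rfl
            intro v _
            congr 1
            rw [Finset.inf'_insert]
          rw [h2] at h1
          rw [mul_comm]
          exact (le_div_iff₀ hNpos).mp h1
        have hAc : (((T j)ᶜ.card : ℕ) : ℝ) = (m : ℝ) - (j : ℝ) := by
          rw [Finset.card_compl, hcardS, hm]
          push_cast [Nat.cast_sub (by omega : j ≤ m)]
          ring
        have hsumc : ((m : ℝ) - (j : ℝ)) * ((Fintype.card V : ℝ) * rV (T (j + 1)))
            ≤ ∑ v : V, ∑ c' ∈ (T j)ᶜ, ((min ((r v c' : ℕ) + 1) (R v) : ℕ) : ℝ) := by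
          rw [Finset.sum_comm, ← hAc, ← nsmul_eq_mul]
          exact Finset.card_nsmul_le_sum (T j)ᶜ _ _ hchoice
        -- Cauchy-Schwarz
        have hCS : (∑ v : V, (R v : ℝ)) ^ 2
            ≤ (Fintype.card V : ℝ) * (∑ v : V, ((R v : ℝ)) * (R v : ℝ)) := by
          have h := sq_sum_le_card_mul_sum_sq (s := (Finset.univ : Finset V))
            (f := fun v => (R v : ℝ))
          rw [Finset.card_univ] at h
          calc (∑ v : V, (R v : ℝ)) ^ 2 ≤ (Fintype.card V : ℝ) * ∑ v : V, (R v : ℝ) ^ 2 := h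
            _ = (Fintype.card V : ℝ) * (∑ v : V, ((R v : ℝ)) * (R v : ℝ)) := by
                congr 1; apply Finset.sum_congr rfl; intro v _; ring
        -- auxiliary real facts
        have hFN : (Fintype.card V : ℝ) ≤ ∑ v : V, (R v : ℝ) := by
          calc (Fintype.card V : ℝ) = ∑ _v : V, (1 : ℝ) := by
                rw [Finset.sum_const, Finset.card_univ, nsmul_eq_mul, mul_one]
            _ ≤ ∑ v : V, (R v : ℝ) := by
                apply Finset.sum_le_sum
                intro v _
                exact_mod_cast hR1 v
        have hyx : rV (T (j + 1)) * (Fintype.card V : ℝ) ≤ ∑ v : V, (R v : ℝ) := by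
          rw [hTeq, hrV (insert c (T j)) (Finset.insert_nonempty c (T j)),
            div_mul_cancel₀ _ (ne_of_gt hNpos)]
          apply Finset.sum_le_sum
          intro v _
          have h3 : (insert c (T j)).inf' (Finset.insert_nonempty c (T j))
              (fun c => (r v c : ℕ) + 1) ≤ R v := by
            rw [Finset.inf'_insert]; exact min_le_right _ _
          exact_mod_cast h3
        have hIH : ((j : ℝ) + 1) * (∑ v : V, (R v : ℝ))
            ≤ 2 * ((m : ℝ) + 1) * (Fintype.card V : ℝ) := by
          have h4 := ih hjk'
          rw [hrV (T j) hS, div_le_div_iff₀ hNpos (by positivity)] at h4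
          linarith
        have hA1 : (1 : ℝ) ≤ (m : ℝ) - (j : ℝ) := by
          have h5 : (j : ℝ) + 1 ≤ (m : ℝ) := by exact_mod_cast hjm
          linarith
        have h1' : 2 * ((m : ℝ) - (j : ℝ)) * ((Fintype.card V : ℝ) * rV (T (j + 1)))
            ≤ 2 * ((m : ℝ) - (j : ℝ)) * (∑ v : V, (R v : ℝ)) + (∑ v : V, (R v : ℝ))
              - (∑ v : V, ((R v : ℝ)) * (R v : ℝ)) := by
          linarith [hsumc, hsumkey]
        have hy2 := greedy_arith (m : ℝ) (j : ℝ) (Fintype.card V : ℝ)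
          (∑ v : V, (R v : ℝ)) (∑ v : V, ((R v : ℝ)) * (R v : ℝ)) (rV (T (j + 1)))
          hNpos hFN hyx hA1 (by positivity) h1' hCS hIH
        have hcj : (((j + 1 : ℕ)) : ℝ) + 1 = (j : ℝ) + 2 := by push_cast; ring
        rw [hcj, le_div_iff₀ (by positivity)]
        linarith [hy2]
  exact main k hk le_rfl
end

section
/- The greedy algorithm is a (1 − 2/(k+1))-approximation for the maximization version of the 1-Borda rule: if the satisfaction score of committee T is m + 1 − r_V(T) where r_V is the average best-rank, then the greedy committee T_k satisfies m + 1 − r_V(T_k) ≥ (1 − 2/(k+1))·M, where M ≤ m is the maximum satisfaction score over all size-k committees. -/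
private lemma sum_min_aux : ∀ (m b : ℕ), b ≤ m →
    2 * (∑ i ∈ Finset.range m, min (i + 1) b) + b * b = b * (2 * m + 1) := by
  intro m
  induction m with
  | zero => intro b hb; interval_cases b; simp
  | succ m ih =>
    intro b hb
    rw [Finset.sum_range_succ]
    rcases Nat.lt_or_ge b (m + 1) with h | h
    · have hbm : b ≤ m := by omega
      have := ih b hbm
      have hmin : min (m + 1) b = b := by omega
      have hr : b * (2 * (m + 1) + 1) = b * (2 * m + 1) + 2 * b := by ring
      omega
    · have hbe : b = m + 1 := by omega
      subst hbe
      have hcongr : ∑ i ∈ Finset.range m, min (i + 1) (m + 1)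
          = ∑ i ∈ Finset.range m, min (i + 1) m := by
        apply Finset.sum_congr rfl
        intro i hi
        have := Finset.mem_range.mp hi
        omega
      rw [hcongr]
      have := ih m le_rfl
      have hmin : min (m + 1) (m + 1) = m + 1 := by omega
      have hr3 : m * (2 * m + 1) = 2 * (m * m) + m := by ring
      have hr4 : (m + 1) * (m + 1) = m * m + 2 * m + 1 := by ring
      have hr5 : (m + 1) * (2 * (m + 1) + 1) = 2 * (m * m) + 5 * m + 3 := by ring
      omega

private lemma step_aux (m j x y : ℝ) (h1 : 1 ≤ j) (h2 : j + 1 ≤ m) (hx0 : 0 ≤ x)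
    (hxm : x ≤ m) (hxu : x ≤ 2 * m / (j + 1) + 1)
    (hstep : y * (m - j) * 2 ≤ x * (2 * m + 1 - 2 * j) - x ^ 2) :
    y ≤ 2 * m / (j + 2) + 1 := by
  have hj1 : (0:ℝ) < j + 1 := by linarith
  have hj2 : (0:ℝ) < j + 2 := by linarith
  have hmj : (0:ℝ) < m - j := by linarith
  have hxu' : x * (j + 1) ≤ 2 * m + (j + 1) := by
    have : x * (j + 1) ≤ (2 * m / (j + 1) + 1) * (j + 1) :=
      mul_le_mul_of_nonneg_right hxu (le_of_lt hj1)
    calc x * (j + 1) ≤ (2 * m / (j + 1) + 1) * (j + 1) := this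
      _ = 2 * m + (j + 1) := by field_simp
  have hpoly : (j + 2) * (x * (2 * m + 1 - 2 * j) - x ^ 2)
      ≤ 2 * (2 * m + (j + 2)) * (m - j) := by
    nlinarith [mul_nonneg (by linarith : (0:ℝ) ≤ m - x)
        (by linarith : (0:ℝ) ≤ 2 * m + (j + 1) - x * (j + 1)),
      mul_nonneg (by linarith : (0:ℝ) ≤ m - x) hx0,
      mul_nonneg (by linarith : (0:ℝ) ≤ 2 * m + (j + 1) - x * (j + 1)) hx0,
      mul_nonneg (by linarith : (0:ℝ) ≤ j - 1) hx0,
      mul_nonneg (by linarith : (0:ℝ) ≤ m - j - 1) hx0,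
      mul_nonneg (by linarith : (0:ℝ) ≤ j - 1) (by linarith : (0:ℝ) ≤ m - j - 1),
      mul_nonneg (by linarith : (0:ℝ) ≤ j - 1) (by linarith : (0:ℝ) ≤ m - x),
      sq_nonneg (x - m + j), sq_nonneg (x - m), sq_nonneg x]
  have hy : y * (j + 2) ≤ 2 * m + (j + 2) := by
    have h3 : y * (m - j) * 2 * (j + 2) ≤ (x * (2 * m + 1 - 2 * j) - x ^ 2) * (j + 2) :=
      mul_le_mul_of_nonneg_right hstep (le_of_lt hj2)
    nlinarith [mul_pos hmj hj2]
  calc y = y * (j + 2) / (j + 2) := by field_simp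
    _ ≤ (2 * m + (j + 2)) / (j + 2) := by gcongr
    _ = 2 * m / (j + 2) + 1 := by field_simp

/-- Greedy is a `(1 − 2/(k+1))`-approximation for the maximization (satisfaction) version of
1-Borda: with satisfaction score `m + 1 − r_V(T)`, the greedy committee `T k` satisfies
`m + 1 − r_V(T k) ≥ (1 − 2/(k+1)) · M`, where `M ≤ m` is the maximum satisfaction score
over all size-`k` committees. -/
theorem greedy_one_borda_max_approx {C V : Type} [Fintype C] [Fintype V] [Nonempty V]
    [DecidableEq C]
    (m k : ℕ) (hm : Fintype.card C = m) (hk : 1 ≤ k) (hkm : k ≤ m)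
    (r : V → C ≃ Fin m)
    (rV : Finset C → ℝ)
    (hrV : ∀ (S : Finset C) (hS : S.Nonempty),
      rV S = (∑ v : V, ((S.inf' hS (fun c => (r v c : ℕ) + 1) : ℕ) : ℝ)) / (Fintype.card V : ℝ))
    (T : ℕ → Finset C) (hT0 : T 0 = ∅)
    (hstep : ∀ j < k, ∃ c ∉ T j, T (j + 1) = insert c (T j) ∧
      ∀ c' ∉ T j, rV (insert c (T j)) ≤ rV (insert c' (T j)))
    (M : ℝ)
    (hMmax : ∀ S : Finset C, S.card = k → (m : ℝ) + 1 - rV S ≤ M)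
    (hMle : M ≤ (m : ℝ)) :
    (m : ℝ) + 1 - rV (T k) ≥ (1 - 2 / ((k : ℝ) + 1)) * M := by
  have hn : (0:ℝ) < (Fintype.card V : ℝ) := by exact_mod_cast Fintype.card_pos
  have hm1 : 1 ≤ m := le_trans hk hkm
  -- committee sizes
  have hcard : ∀ j, j ≤ k → (T j).card = j := by
    intro j
    induction j with
    | zero => intro _; simp [hT0]
    | succ j ih =>
      intro hjk
      obtain ⟨c, hc, hTeq, -⟩ := hstep j (by omega)
      rw [hTeq, Finset.card_insert_of_notMem hc, ih (by omega)]
  have hne : ∀ j, 1 ≤ j → j ≤ k → (T j).Nonempty := by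
    intro j h1 h2
    rw [← Finset.card_pos, hcard j h2]; omega
  -- bounds on rV (T j)
  have hx_bounds : ∀ j (h1 : 1 ≤ j) (h2 : j ≤ k), 0 ≤ rV (T j) ∧ rV (T j) ≤ m := by
    intro j h1 h2
    have hSne := hne j h1 h2
    rw [hrV (T j) hSne]
    constructor
    · apply div_nonneg _ (le_of_lt hn)
      apply Finset.sum_nonneg; intro v _; positivity
    · rw [div_le_iff₀ hn]
      calc ∑ v : V, (((T j).inf' hSne (fun c => (r v c : ℕ) + 1) : ℕ) : ℝ)
          ≤ ∑ _v : V, (m:ℝ) := by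
            apply Finset.sum_le_sum; intro v _
            obtain ⟨c, hc⟩ := id hSne
            have h3 : (T j).inf' hSne (fun c => (r v c : ℕ) + 1) ≤ (r v c : ℕ) + 1 :=
              Finset.inf'_le _ hc
            have h4 : ((r v) c : ℕ) + 1 ≤ m := (r v c).2
            exact_mod_cast le_trans h3 h4
        _ = (m:ℝ) * (Fintype.card V : ℝ) := by
            rw [Finset.sum_const, Finset.card_univ, nsmul_eq_mul, mul_comm]
  -- key greedy step inequality
  have key : ∀ j, 1 ≤ j → j < k →
      rV (T (j+1)) * ((m:ℝ) - j) * 2 ≤ rV (T j) * (2*(m:ℝ) + 1 - 2*j) - rV (T j) ^ 2 := by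
    intro j hj1 hjk
    have hSne : (T j).Nonempty := hne j hj1 (le_of_lt hjk)
    set S := T j with hS_def
    set b : V → ℕ := fun v => S.inf' hSne (fun c => (r v c : ℕ) + 1) with hb_def
    have hb_le : ∀ v, b v ≤ m := by
      intro v
      obtain ⟨c, hc⟩ := id hSne
      have h3 : b v ≤ (r v c : ℕ) + 1 := Finset.inf'_le _ hc
      have h4 : ((r v) c : ℕ) + 1 ≤ m := (r v c).2
      omega
    -- per-voter identity in ℕ
    have hvoter : ∀ v : V,
        2 * (∑ c ∈ Sᶜ, min ((r v c : ℕ) + 1) (b v)) + b v * b v + 2 * (j * b v)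
          = b v * (2 * m + 1) := by
      intro v
      have hsum_univ : ∑ c : C, min ((r v c : ℕ) + 1) (b v)
          = ∑ i ∈ Finset.range m, min (i + 1) (b v) := by
        rw [← Fin.sum_univ_eq_sum_range (fun i => min (i + 1) (b v)) m]
        exact Equiv.sum_comp (r v) (fun i : Fin m => min ((i : ℕ) + 1) (b v))
      have hsum_S : ∑ c ∈ S, min ((r v c : ℕ) + 1) (b v) = j * b v := by
        rw [Finset.sum_congr rfl (fun c hc => min_eq_right (Finset.inf'_le _ hc)),
          Finset.sum_const, hcard j (le_of_lt hjk), smul_eq_mul]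
      have hsplit := Finset.sum_add_sum_compl S (fun c => min ((r v c : ℕ) + 1) (b v))
      have haux := sum_min_aux m (b v) (hb_le v)
      omega
    set Bs : ℝ := ∑ v : V, ((b v : ℕ) : ℝ) with hBs_def
    set Q : ℝ := ∑ v : V, ((b v : ℕ) : ℝ)^2 with hQ_def
    set A : ℝ := ∑ v : V, ∑ c ∈ Sᶜ, ((min ((r v c : ℕ) + 1) (b v) : ℕ) : ℝ) with hA_def
    have hA_eq : 2 * A = (2*(m:ℝ) + 1 - 2*j) * Bs - Q := by
      rw [hA_def, Finset.mul_sum]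
      rw [show (2*(m:ℝ) + 1 - 2*j) * Bs - Q
          = ∑ v : V, ((2*(m:ℝ) + 1 - 2*j) * ((b v : ℕ) : ℝ) - ((b v : ℕ) : ℝ)^2) by
        rw [Finset.sum_sub_distrib, ← Finset.mul_sum]]
      apply Finset.sum_congr rfl
      intro v _
      have h5 := hvoter v
      have h6 := congrArg (fun x : ℕ => (x : ℝ)) h5
      push_cast at h6 ⊢
      linarith [h6]
    have hCS : Bs^2 ≤ (Fintype.card V : ℝ) * Q := by
      have := sq_sum_le_card_mul_sum_sq (s := (Finset.univ : Finset V))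
        (f := fun v => ((b v : ℕ) : ℝ))
      simpa [Finset.card_univ] using this
    obtain ⟨c₀, hc₀, hTeq, hgr⟩ := hstep j hjk
    have hins : ∀ c' ∈ Sᶜ, rV (insert c' S)
        = (∑ v : V, ((min ((r v c' : ℕ) + 1) (b v) : ℕ) : ℝ)) / (Fintype.card V : ℝ) := by
      intro c' hc'
      rw [hrV (insert c' S) (Finset.insert_nonempty c' S)]
      congr 1
      refine Finset.sum_congr rfl (fun v _ => ?_)
      congr 1
      rw [Finset.inf'_insert (H := hSne)]
    have hsum_ge : rV (T (j+1)) * ((Sᶜ.card : ℕ) : ℝ) ≤ ∑ c' ∈ Sᶜ, rV (insert c' S) := by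
      have h7 := Finset.card_nsmul_le_sum (Sᶜ) (fun c' => rV (insert c' S)) (rV (T (j+1)))
        (fun c' hc' => by
          rw [hTeq]
          exact hgr c' (by simpa [Finset.mem_compl] using hc'))
      simpa [nsmul_eq_mul, mul_comm] using h7
    have hcompl_card : ((Sᶜ.card : ℕ) : ℝ) = (m:ℝ) - j := by
      rw [Finset.card_compl, hcard j (le_of_lt hjk), hm]
      have : j ≤ m := by omega
      push_cast [this]
      ring
    have hsum_eq : ∑ c' ∈ Sᶜ, rV (insert c' S) = A / (Fintype.card V : ℝ) := by
      rw [Finset.sum_congr rfl hins, ← Finset.sum_div]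
      congr 1
      rw [hA_def, Finset.sum_comm]
    have h8 : rV (T (j+1)) * ((m:ℝ) - j) ≤ A / (Fintype.card V : ℝ) := by
      rw [← hcompl_card, ← hsum_eq]; exact hsum_ge
    have hxj : rV S = Bs / (Fintype.card V : ℝ) := hrV S hSne
    rw [hxj]
    have h9 : A / (Fintype.card V : ℝ) * 2
        = ((2*(m:ℝ) + 1 - 2*j) * Bs - Q) / (Fintype.card V : ℝ) := by
      rw [← hA_eq]; ring
    have h10 : ((2*(m:ℝ) + 1 - 2*j) * Bs - Q) / (Fintype.card V : ℝ)
        ≤ Bs / (Fintype.card V : ℝ) * (2*(m:ℝ) + 1 - 2*j) - (Bs / (Fintype.card V : ℝ))^2 := by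
      have h11 : Bs / (Fintype.card V : ℝ) * (2*(m:ℝ) + 1 - 2*j) - (Bs / (Fintype.card V : ℝ))^2
          = ((2*(m:ℝ) + 1 - 2*j) * Bs - Bs^2 / (Fintype.card V : ℝ)) / (Fintype.card V : ℝ) := by
        field_simp
      rw [h11]
      gcongr
      have h12 : Bs^2 / (Fintype.card V : ℝ) ≤ Q := by
        rw [div_le_iff₀ hn]
        linarith [hCS]
      linarith
    nlinarith [mul_le_mul_of_nonneg_right h8 (by norm_num : (0:ℝ) ≤ 2)]
  -- invariant by induction
  have inv : ∀ j, 1 ≤ j → j ≤ k → rV (T j) ≤ 2*(m:ℝ)/((j:ℝ)+1) + 1 := by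
    intro j
    induction j with
    | zero => omega
    | succ j ih =>
      intro _ hjk
      rcases Nat.eq_zero_or_pos j with h0 | hpos
      · subst h0
        have hb := (hx_bounds 1 le_rfl hjk).2
        have hmr : (1:ℝ) ≤ m := by exact_mod_cast hm1
        have : 2*(m:ℝ)/((0:ℕ)+1+1 : ℝ) = m := by norm_num
        push_cast
        norm_num
        linarith
      · have hkey := key j hpos (by omega)
        have hih := ih hpos (by omega)
        have hb := hx_bounds j hpos (by omega)
        have hjm : (j:ℝ) + 1 ≤ m := by exact_mod_cast (show j + 1 ≤ m by omega)
        have hj1 : (1:ℝ) ≤ (j:ℝ) := by exact_mod_cast hpos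
        have hres := step_aux (m:ℝ) (j:ℝ) (rV (T j)) (rV (T (j+1))) hj1 hjm hb.1 hb.2 hih hkey
        have hcast : ((j+1 : ℕ) : ℝ) + 1 = (j:ℝ) + 2 := by push_cast; ring
        rw [hcast]
        exact hres
  -- conclusion
  have hxk := inv k hk le_rfl
  have hk1 : (0:ℝ) < (k:ℝ) + 1 := by positivity
  have hkr : (1:ℝ) ≤ (k:ℝ) := by exact_mod_cast hk
  have hfac : (0:ℝ) ≤ 1 - 2/((k:ℝ)+1) := by
    rw [sub_nonneg, div_le_one hk1]
    linarith
  have h8 : (1 - 2/((k:ℝ)+1)) * M ≤ (1 - 2/((k:ℝ)+1)) * m := mul_le_mul_of_nonneg_left hMle hfac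
  have h9 : (1 - 2/((k:ℝ)+1)) * (m:ℝ) = m - 2*(m:ℝ)/((k:ℝ)+1) := by
    field_simp
  linarith
end

section
/- For every m and k ≤ m there exists an instance (namely the instance with one voter for each of the m! permutations of the candidates) in which every size-k committee T has 1-Borda score r_V(T) exactly (m+1)/(k+1); hence the optimum equals (m+1)/(k+1). -/
private lemma hockey_stick (k : ℕ) : ∀ n : ℕ, ∑ j ∈ Finset.range n, j.choose k = n.choose (k+1) := by
  intro n
  induction n with
  | zero => simp
  | succ n ih =>
    rw [Finset.sum_range_succ, ih, Nat.choose_succ_succ, Nat.succ_eq_add_one]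
    omega

private lemma card_filter_le_fin (m i : ℕ) :
    (Finset.univ.filter fun x : Fin m => i ≤ (x : ℕ)).card = m - i := by
  rw [← Nat.card_Ico i m]
  refine Finset.card_bij (fun x _ => (x : ℕ)) ?_ ?_ ?_
  · intro a ha
    simp only [Finset.mem_filter, Finset.mem_univ, true_and] at ha
    exact Finset.mem_Ico.mpr ⟨ha, a.isLt⟩
  · intro a _ b _ h
    exact Fin.val_injective h
  · intro b hb
    obtain ⟨h1, h2⟩ := Finset.mem_Ico.mp hb
    exact ⟨⟨b, h2⟩, by simp [h1], rfl⟩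

private def Fmin (m : ℕ) : Finset (Fin m) → ℕ :=
  fun S => if h : S.Nonempty then ((S.min' h : ℕ) + 1) else 0

private lemma Hsum (m k : ℕ) (hk : 1 ≤ k) :
    ∑ S ∈ Finset.powersetCard k (Finset.univ : Finset (Fin m)), Fmin m S
      = (m+1).choose (k+1) := by
  set A := Finset.powersetCard k (Finset.univ : Finset (Fin m)) with hA
  have h1 : ∀ S ∈ A, Fmin m S = ∑ i ∈ Finset.range m, if (∀ x ∈ S, i ≤ x.val) then 1 else 0 := by
    intro S hS
    have hcard : S.card = k := (Finset.mem_powersetCard.mp hS).2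
    have hSne : S.Nonempty := Finset.card_pos.mp (by omega)
    rw [← Finset.card_filter]
    have hfe : (Finset.range m).filter (fun i => ∀ x ∈ S, i ≤ x.val)
        = Finset.range ((S.min' hSne : ℕ) + 1) := by
      ext i
      simp only [Finset.mem_filter, Finset.mem_range]
      constructor
      · rintro ⟨_, hall⟩
        have := hall _ (S.min'_mem hSne)
        omega
      · intro hi
        have hlt : i ≤ (S.min' hSne : ℕ) := by omega
        refine ⟨lt_of_le_of_lt hlt (S.min' hSne).isLt, fun x hx => le_trans hlt ?_⟩
        exact S.min'_le x hx
    rw [hfe, Finset.card_range, Fmin, dif_pos hSne]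
  rw [Finset.sum_congr rfl h1, Finset.sum_comm]
  have h2 : ∀ i ∈ Finset.range m,
      (∑ S ∈ A, if (∀ x ∈ S, i ≤ x.val) then 1 else 0) = (m - i).choose k := by
    intro i _
    rw [← Finset.card_filter]
    have : A.filter (fun S => ∀ x ∈ S, i ≤ x.val)
        = Finset.powersetCard k (Finset.univ.filter fun x : Fin m => i ≤ (x : ℕ)) := by
      ext S
      simp only [hA, Finset.mem_filter, Finset.mem_powersetCard, Finset.subset_iff,
        Finset.mem_univ, true_and]
      tauto
    rw [this, Finset.card_powersetCard, card_filter_le_fin]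
  rw [Finset.sum_congr rfl h2]
  have h3 : ∑ i ∈ Finset.range m, (m - i).choose k = ∑ j ∈ Finset.range m, (j+1).choose k := by
    rw [← Finset.sum_range_reflect]
    refine Finset.sum_congr rfl fun j hj => ?_
    simp only [Finset.mem_range] at hj
    congr 1
    omega
  have h4 := hockey_stick k (m+1)
  rw [Finset.sum_range_succ' _ m] at h4
  have h5 : Nat.choose 0 k = 0 := Nat.choose_eq_zero_of_lt hk
  rw [h3]
  omega

/-- In the instance with one voter for each of the `m!` permutations of the `m` candidates,
every size-`k` committee `T` has 1-Borda score exactly `(m+1)/(k+1)`; hence the optimum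
equals `(m+1)/(k+1)`. -/
theorem all_permutations_instance_score {C : Type} [Fintype C] [DecidableEq C]
    (m k : ℕ) (hm : Fintype.card C = m) (hk : 1 ≤ k) (hkm : k ≤ m)
    (T : Finset C) (hT : T.card = k) (hTne : T.Nonempty) :
    (∑ e : C ≃ Fin m, ((T.inf' hTne (fun c => (e c : ℕ) + 1) : ℕ) : ℝ))
        / (Fintype.card (C ≃ Fin m) : ℝ)
      = ((m : ℝ) + 1) / ((k : ℝ) + 1) := by
  classical
  have e0 : C ≃ Fin m := Fintype.equivFinOfCardEq hm
  have hcardE : Fintype.card (C ≃ Fin m) = m.factorial := by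
    rw [Fintype.card_equiv e0, hm]
  set A := Finset.powersetCard k (Finset.univ : Finset (Fin m)) with hA
  set Φ : (C ≃ Fin m) → Finset (Fin m) := fun e => T.image ⇑e with hΦ
  -- Step A : the score of a voter depends only on the image of T
  have hstepA : ∀ e : C ≃ Fin m,
      T.inf' hTne (fun c => (e c : ℕ) + 1) = Fmin m (Φ e) := by
    intro e
    have hne : (Φ e).Nonempty := hTne.image _
    rw [Fmin, dif_pos hne]
    apply le_antisymm
    · obtain ⟨c, hc, hce⟩ := Finset.mem_image.mp ((Φ e).min'_mem hne)
      calc T.inf' hTne (fun c => (e c : ℕ) + 1) ≤ (e c : ℕ) + 1 := Finset.inf'_le _ hc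
        _ = _ := by rw [hce]
    · obtain ⟨c, hc, hce⟩ := Finset.exists_mem_eq_inf' hTne (fun c => ((e c : ℕ) + 1))
      rw [hce]
      have hle : (Φ e).min' hne ≤ e c := Finset.min'_le _ _ (Finset.mem_image_of_mem _ hc)
      exact Nat.add_le_add_right hle 1
  -- the image of Φ is exactly the k-subsets
  have himage : Finset.univ.image Φ = A := by
    apply Finset.Subset.antisymm
    · intro S hS
      obtain ⟨e, _, rfl⟩ := Finset.mem_image.mp hS
      rw [hA, Finset.mem_powersetCard]
      exact ⟨Finset.subset_univ _,
        by rw [hΦ]; rw [Finset.card_image_of_injective _ e.injective, hT]⟩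
    · intro S hS
      rw [hA, Finset.mem_powersetCard] at hS
      have hTS : Fintype.card {x // x ∈ T} = Fintype.card {x : Fin m // x ∈ S} := by
        simp [Fintype.card_coe, hT, hS.2]
      have hTSc : Fintype.card {x // ¬ x ∈ T} = Fintype.card {x : Fin m // ¬ x ∈ S} := by
        rw [Fintype.card_subtype_compl, Fintype.card_subtype_compl, hTS, hm, Fintype.card_fin]
      let e1 : {x // x ∈ T} ≃ {x : Fin m // x ∈ S} := Fintype.equivOfCardEq hTS
      let e2 : {x // ¬ x ∈ T} ≃ {x : Fin m // ¬ x ∈ S} := Fintype.equivOfCardEq hTSc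
      let e : C ≃ Fin m :=
        (Equiv.sumCompl (· ∈ T)).symm.trans ((Equiv.sumCongr e1 e2).trans (Equiv.sumCompl (· ∈ S)))
      refine Finset.mem_image.mpr ⟨e, Finset.mem_univ _, ?_⟩
      apply Finset.eq_of_subset_of_card_le
      · intro y hy
        obtain ⟨c, hc, rfl⟩ := Finset.mem_image.mp hy
        have : e c = (e1 ⟨c, hc⟩ : Fin m) := by
          simp [e, Equiv.sumCompl_symm_apply_of_pos hc]
        rw [this]
        exact (e1 ⟨c, hc⟩).2
      · rw [hΦ]; rw [Finset.card_image_of_injective _ e.injective, hT, hS.2]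
  -- all fibers have the same cardinality
  have hfib : ∀ S1 ∈ A, ∀ S2 ∈ A,
      (Finset.univ.filter fun e => Φ e = S1).card
        = (Finset.univ.filter fun e => Φ e = S2).card := by
    intro S1 h1 S2 h2
    rw [hA, Finset.mem_powersetCard] at h1 h2
    have hc12 : Fintype.card {x : Fin m // x ∈ S1} = Fintype.card {x : Fin m // x ∈ S2} := by
      simp [Fintype.card_coe, h1.2, h2.2]
    have hc12c : Fintype.card {x : Fin m // ¬ x ∈ S1} = Fintype.card {x : Fin m // ¬ x ∈ S2} := by
      rw [Fintype.card_subtype_compl, Fintype.card_subtype_compl, hc12]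
    set σ : Equiv.Perm (Fin m) :=
      Equiv.subtypeCongr (Fintype.equivOfCardEq hc12) (Fintype.equivOfCardEq hc12c) with hσdef
    have himg12 : S1.image ⇑σ = S2 := by
      apply Finset.eq_of_subset_of_card_le
      · intro y hy
        obtain ⟨x, hx, rfl⟩ := Finset.mem_image.mp hy
        have : σ x = ((Fintype.equivOfCardEq hc12) ⟨x, hx⟩ : Fin m) := by
          simp [hσdef, Equiv.subtypeCongr, Equiv.sumCompl_symm_apply_of_pos hx]
        rw [this]
        exact ((Fintype.equivOfCardEq hc12) ⟨x, hx⟩).2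
      · rw [Finset.card_image_of_injective _ σ.injective, h1.2, h2.2]
    have himg21 : S2.image ⇑σ.symm = S1 := by
      rw [← himg12, Finset.image_image]
      simp
    refine Finset.card_bij (fun e _ => e.trans σ) ?_ ?_ ?_
    · intro e he
      simp only [Finset.mem_filter, Finset.mem_univ, true_and] at he ⊢
      have : Φ (e.trans σ) = (Φ e).image ⇑σ := by
        rw [hΦ]; simp [Finset.image_image]
      rw [this, he, himg12]
    · intro a _ b _ h
      have h2 := congrArg (fun f => f.trans σ.symm) h
      simpa [Equiv.trans_assoc, Equiv.self_trans_symm] using h2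
    · intro f hf
      simp only [Finset.mem_filter, Finset.mem_univ, true_and] at hf
      refine ⟨f.trans σ.symm, ?_, ?_⟩
      · simp only [Finset.mem_filter, Finset.mem_univ, true_and]
        have : Φ (f.trans σ.symm) = (Φ f).image ⇑σ.symm := by
          rw [hΦ]; simp [Finset.image_image]
        rw [this, hf, himg21]
      · ext x
        simp
  have hAne : A.Nonempty := by
    rw [hA]
    rw [Finset.powersetCard_nonempty]
    simpa using hkm
  obtain ⟨S0, hS0⟩ := hAne
  set f0 := (Finset.univ.filter fun e => Φ e = S0).card with hf0
  have hAcard : A.card = m.choose k := by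
    rw [hA, Finset.card_powersetCard, Finset.card_univ, Fintype.card_fin]
  have hfact : m.factorial = m.choose k * f0 := by
    have h := Finset.card_eq_sum_card_image Φ (Finset.univ : Finset (C ≃ Fin m))
    rw [himage, Finset.card_univ, hcardE] at h
    rw [h, Finset.sum_congr rfl (fun S hS => hfib S hS S0 hS0), Finset.sum_const, hAcard,
      smul_eq_mul]
  have hN : (∑ e : C ≃ Fin m, T.inf' hTne fun c => (e c : ℕ) + 1)
      = f0 * (m+1).choose (k+1) := by
    calc (∑ e : C ≃ Fin m, T.inf' hTne fun c => (e c : ℕ) + 1)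
        = ∑ e : C ≃ Fin m, Fmin m (Φ e) := Finset.sum_congr rfl (fun e _ => hstepA e)
      _ = ∑ S ∈ Finset.univ.image Φ,
            (Finset.univ.filter fun e => Φ e = S).card • Fmin m S := Finset.sum_comp _ _
      _ = ∑ S ∈ A, f0 * Fmin m S := by
          rw [himage]
          exact Finset.sum_congr rfl fun S hS => by rw [hfib S hS S0 hS0, smul_eq_mul]
      _ = f0 * ∑ S ∈ A, Fmin m S := by rw [Finset.mul_sum]
      _ = f0 * (m+1).choose (k+1) := by rw [hA, Hsum m k hk]
  have key : (∑ e : C ≃ Fin m, T.inf' hTne fun c => (e c : ℕ) + 1) * (k+1)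
      = (m+1) * m.factorial := by
    rw [hN, hfact, mul_assoc, ← Nat.add_one_mul_choose_eq]
    ring
  rw [hcardE, ← Nat.cast_sum]
  have hm0 : (0:ℝ) < (m.factorial : ℝ) := by
    exact_mod_cast m.factorial_pos
  rw [div_eq_div_iff hm0.ne' (by positivity)]
  exact_mod_cast key
end

section
/- The Banzhaf greedy algorithm achieves 1-Borda score at most (m+1)/(k+1): if at each step j the algorithm picks c_j ∉ T_{j−1} minimizing Σ over all size-k supersets S ⊇ T_{j−1} ∪ {c_j} of r_V(S), then the final committee T_k satisfies r_V(T_k) ≤ (m+1)/(k+1). More precisely, for every j, (1/binom(m−j, k−j))·Σ_{S ⊇ T_j, |S|=k} r_V(S) ≤ (m+1)/(k+1). -/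
open Finset

lemma hockey (n k : ℕ) : ∑ i ∈ range (n+1), Nat.choose i k = Nat.choose (n+1) (k+1) := by
  rw [← Nat.sum_Icc_choose]
  refine (Finset.sum_subset ?_ ?_).symm
  · intro i hi; simp only [mem_Icc] at hi; simp [mem_range]; omega
  · intro i hi hni; simp only [mem_range] at hi; simp only [mem_Icc] at hni
    exact Nat.choose_eq_zero_of_lt (by omega)

-- f S = card of valid thresholds
lemma filter_card_eq_inf' {C : Type} [DecidableEq C] {m : ℕ} (e : C → Fin m)
    (S : Finset C) (hS : S.Nonempty) :
    (((range (m+1)).filter (fun t => ∀ c ∈ S, t ≤ (e c : ℕ)))).card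
      = S.inf' hS (fun c => (e c : ℕ) + 1) := by
  have h1 : ((range (m+1)).filter (fun t => ∀ c ∈ S, t ≤ (e c : ℕ)))
      = range (S.inf' hS (fun c => (e c : ℕ) + 1)) := by
    ext t
    simp only [mem_filter, mem_range]
    constructor
    · rintro ⟨-, h2⟩
      obtain ⟨c, hc, hceq⟩ := Finset.exists_mem_eq_inf' hS (fun c => (e c : ℕ) + 1)
      rw [hceq]; exact Nat.lt_succ_of_le (h2 c hc)
    · intro ht
      obtain ⟨c0, hc0⟩ := hS
      refine ⟨?_, fun c hc => ?_⟩
      · have := Finset.inf'_le (fun c => (e c : ℕ) + 1) hc0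
        have := (e c0).isLt
        omega
      · have := Finset.inf'_le (fun c => (e c : ℕ) + 1) hc
        omega
  rw [h1, card_range]

lemma card_filter_ge {C : Type} [Fintype C] [DecidableEq C] {m : ℕ} (e : C ≃ Fin m) (t : ℕ) :
    ((univ : Finset C).filter (fun c => t ≤ (e c : ℕ))).card = m - t := by
  have h1 : ((univ : Finset C).filter (fun c => t ≤ (e c : ℕ)))
      = ((univ : Finset (Fin m)).filter (fun i : Fin m => t ≤ (i : ℕ))).map e.symm.toEmbedding := by
    ext c
    simp only [mem_filter, mem_univ, true_and, mem_map, Equiv.coe_toEmbedding]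
    constructor
    · intro h; exact ⟨e c, h, e.symm_apply_apply c⟩
    · rintro ⟨i, hi, rfl⟩; simpa using hi
  rw [h1, card_map]
  have h2 : ((univ : Finset (Fin m)).filter (fun i : Fin m => t ≤ (i : ℕ))).map ⟨Fin.val, Fin.val_injective⟩
      = Ico t m := by
    ext x
    simp only [mem_map, mem_filter, mem_univ, true_and, mem_Ico, Function.Embedding.coeFn_mk]
    constructor
    · rintro ⟨i, hi, rfl⟩; exact ⟨hi, i.isLt⟩
    · rintro ⟨h1, h2⟩; exact ⟨⟨x, h2⟩, h1, rfl⟩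
  rw [← card_map ⟨Fin.val, Fin.val_injective⟩, h2, Nat.card_Ico]

lemma sum_f {C : Type} [Fintype C] [DecidableEq C] {m k : ℕ} (e : C ≃ Fin m)
    :
    ∑ S ∈ (univ : Finset C).powersetCard k,
      (((range (m+1)).filter (fun t => ∀ c ∈ S, t ≤ (e c : ℕ)))).card
      = Nat.choose (m+1) (k+1) := by
  simp only [Finset.card_filter]
  rw [Finset.sum_comm]
  have h1 : ∀ t, (∑ S ∈ (univ : Finset C).powersetCard k, if (∀ c ∈ S, t ≤ (e c : ℕ)) then 1 else 0)
      = Nat.choose (m - t) k := by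
    intro t
    rw [← Finset.card_filter]
    have h2 : ((univ : Finset C).powersetCard k).filter (fun S => ∀ c ∈ S, t ≤ (e c : ℕ))
        = ((univ : Finset C).filter (fun c => t ≤ (e c : ℕ))).powersetCard k := by
      ext S
      simp only [mem_filter, mem_powersetCard, subset_iff, mem_filter, mem_univ, true_and]
      tauto
    rw [h2, Finset.card_powersetCard, card_filter_ge e t]
  simp only [h1]
  calc ∑ t ∈ range (m+1), Nat.choose (m - t) k
      = ∑ t ∈ range (m+1), Nat.choose (m + 1 - 1 - t) k := by norm_num
    _ = ∑ t ∈ range (m+1), Nat.choose t k := Finset.sum_range_reflect (fun i => Nat.choose i k) (m+1)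
    _ = Nat.choose (m+1) (k+1) := hockey m k


/-- The Banzhaf greedy algorithm achieves 1-Borda score at most `(m+1)/(k+1)`: picking at
each step the candidate minimizing the sum of `r_V(S)` over all size-`k` supersets `S` of
the current partial committee yields, for every `j ≤ k`, a conditional average
`(1/C(m−j,k−j)) Σ_{S ⊇ T j, |S| = k} r_V(S) ≤ (m+1)/(k+1)`; in particular the final
committee satisfies `r_V(T k) ≤ (m+1)/(k+1)`. -/
theorem banzhaf_achieves_rand {C V : Type} [Fintype C] [Fintype V] [Nonempty V]
    [DecidableEq C]
    (m k : ℕ) (hm : Fintype.card C = m) (hk : 1 ≤ k) (hkm : k ≤ m)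
    (r : V → C ≃ Fin m)
    (rV : Finset C → ℝ)
    (hrV : ∀ (S : Finset C) (hS : S.Nonempty),
      rV S = (∑ v : V, ((S.inf' hS (fun c => (r v c : ℕ) + 1) : ℕ) : ℝ)) / (Fintype.card V : ℝ))
    (T : ℕ → Finset C) (hT0 : T 0 = ∅)
    (hstep : ∀ j < k, ∃ c ∉ T j, T (j + 1) = insert c (T j) ∧
      ∀ c' ∉ T j,
        (∑ S ∈ ((Finset.univ : Finset C).powersetCard k).filter
            (fun S => insert c (T j) ⊆ S), rV S)
        ≤ (∑ S ∈ ((Finset.univ : Finset C).powersetCard k).filter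
            (fun S => insert c' (T j) ⊆ S), rV S)) :
    (∀ j ≤ k,
      (∑ S ∈ ((Finset.univ : Finset C).powersetCard k).filter (fun S => T j ⊆ S), rV S)
          / (Nat.choose (m - j) (k - j) : ℝ)
        ≤ ((m : ℝ) + 1) / ((k : ℝ) + 1)) ∧
    rV (T k) ≤ ((m : ℝ) + 1) / ((k : ℝ) + 1) := by
  classical
  set q : ℝ := ((m : ℝ) + 1) / ((k : ℝ) + 1) with hqdef
  set Pk : Finset (Finset C) := (Finset.univ : Finset C).powersetCard k with hPkdef
  set A : ℕ → ℝ := fun j => ∑ S ∈ Pk.filter (fun S => T j ⊆ S), rV S with hAdef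
  have hq0 : 0 ≤ q := by positivity
  have hne : ∀ S ∈ Pk, S.Nonempty := by
    intro S hS
    rw [hPkdef, mem_powersetCard] at hS
    exact card_pos.mp (by omega)
  have hn : (0:ℝ) < (Fintype.card V : ℝ) := by
    exact_mod_cast Fintype.card_pos
  -- rewrite rV in terms of filter cards
  have hSval : ∀ S ∈ Pk, rV S
      = (∑ v : V, ((((range (m+1)).filter (fun t => ∀ c ∈ S, t ≤ (r v c : ℕ))).card : ℕ) : ℝ))
        / (Fintype.card V : ℝ) := by
    intro S hS
    rw [hrV S (hne S hS)]
    congr 1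
    refine Finset.sum_congr rfl (fun v _ => ?_)
    have h := filter_card_eq_inf' (fun c => r v c) S (hne S hS)
    norm_cast
    rw [← h]
    congr 1
    exact Finset.filter_congr_decidable _ _ _
  -- value of A 0
  have hA0 : A 0 = (Nat.choose (m+1) (k+1) : ℝ) := by
    have h1 : Pk.filter (fun S => T 0 ⊆ S) = Pk := by
      refine Finset.filter_true_of_mem (fun S _ => ?_)
      rw [hT0]; exact empty_subset S
    rw [hAdef]
    simp only [h1]
    rw [Finset.sum_congr rfl hSval, ← Finset.sum_div, Finset.sum_comm]
    have h2 : ∀ v : V, (∑ S ∈ Pk, ((((range (m+1)).filter (fun t => ∀ c ∈ S, t ≤ (r v c : ℕ))).card : ℕ) : ℝ))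
        = (Nat.choose (m+1) (k+1) : ℝ) := by
      intro v
      rw [← Nat.cast_sum]
      exact_mod_cast congrArg Nat.cast (sum_f (r v))
    rw [Finset.sum_congr rfl (fun v _ => h2 v), Finset.sum_const, Finset.card_univ,
      nsmul_eq_mul, mul_comm, mul_div_assoc, div_self hn.ne', mul_one]
  -- the double-counting step
  have swap : ∀ j, j < k → (T j).card = j →
      ∑ c ∈ univ \ T j, (∑ S ∈ Pk.filter (fun S => insert c (T j) ⊆ S), rV S)
        = ((k : ℝ) - j) * A j := by
    intro j hj hcard
    simp only [Finset.sum_filter]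
    rw [Finset.sum_comm, hAdef]
    simp only [Finset.sum_filter]
    rw [Finset.mul_sum]
    refine Finset.sum_congr rfl (fun S hS => ?_)
    by_cases hTS : T j ⊆ S
    · have hcond : ∀ c, (insert c (T j) ⊆ S) ↔ (c ∈ S) := by
        intro c; rw [insert_subset_iff]; exact ⟨fun h => h.1, fun h => ⟨h, hTS⟩⟩
      simp only [hcond, hTS, if_true]
      rw [Finset.sum_ite_mem, Finset.sum_const, nsmul_eq_mul]
      congr 1
      have h3 : (univ \ T j) ∩ S = S \ T j := by
        ext c
        simp only [mem_inter, mem_sdiff, mem_univ, true_and]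
        tauto
      have hScard : S.card = k := by
        rw [hPkdef, mem_powersetCard] at hS; exact hS.2
      rw [h3, card_sdiff_of_subset hTS, hcard, hScard]
      have : j ≤ k := hj.le
      push_cast [Nat.cast_sub this]
      ring
    · have hcond : ∀ c, ¬ (insert c (T j) ⊆ S) := by
        intro c h; exact hTS ((subset_insert c (T j)).trans h)
      simp [hcond, hTS]
  -- main invariant
  have key : ∀ j, j ≤ k → (T j).card = j ∧ A j ≤ q * (Nat.choose (m - j) (k - j) : ℝ) := by
    intro j
    induction j with
    | zero =>
      intro _
      refine ⟨by rw [hT0]; exact card_empty, ?_⟩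
      rw [hA0, Nat.sub_zero, Nat.sub_zero]
      have hid : (m + 1) * Nat.choose m k = Nat.choose (m+1) (k+1) * (k+1) :=
        Nat.add_one_mul_choose_eq m k
      have hkpos : (0:ℝ) < (k:ℝ) + 1 := by positivity
      rw [hqdef, div_mul_eq_mul_div, le_div_iff₀ hkpos]
      refine le_of_eq ?_
      calc (Nat.choose (m+1) (k+1) : ℝ) * ((k:ℝ) + 1)
          = ((Nat.choose (m+1) (k+1) * (k+1) : ℕ) : ℝ) := by push_cast; ring
        _ = (((m + 1) * Nat.choose m k : ℕ) : ℝ) := by rw [← hid]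
        _ = ((m:ℝ) + 1) * (Nat.choose m k : ℝ) := by push_cast; ring
    | succ j ih =>
      intro hjk
      have hj : j < k := hjk
      obtain ⟨hcard, hAle⟩ := ih hj.le
      obtain ⟨c, hc, hTsucc, hmin⟩ := hstep j hj
      have hcard' : (T (j+1)).card = j + 1 := by
        rw [hTsucc, card_insert_of_notMem hc, hcard]
      refine ⟨hcard', ?_⟩
      have hAsucc : A (j+1) = ∑ S ∈ Pk.filter (fun S => insert c (T j) ⊆ S), rV S := by
        rw [hAdef]; simp only [hTsucc]
      -- number of candidates outside T j
      have hcardout : (univ \ T j).card = m - j := by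
        rw [card_sdiff_of_subset (subset_univ _), card_univ, hm, hcard]
      have hjm : j < m := lt_of_lt_of_le hj hkm
      -- sum the minimality inequality
      have hsumineq : ((m:ℝ) - j) * (∑ S ∈ Pk.filter (fun S => insert c (T j) ⊆ S), rV S)
          ≤ ((k:ℝ) - j) * A j := by
        rw [← swap j hj hcard]
        have h4 : ∀ c' ∈ univ \ T j,
            (∑ S ∈ Pk.filter (fun S => insert c (T j) ⊆ S), rV S)
            ≤ (∑ S ∈ Pk.filter (fun S => insert c' (T j) ⊆ S), rV S) := by
          intro c' hc'
          exact hmin c' (mem_sdiff.mp hc').2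
        calc ((m:ℝ) - j) * (∑ S ∈ Pk.filter (fun S => insert c (T j) ⊆ S), rV S)
            = ∑ _c' ∈ univ \ T j, (∑ S ∈ Pk.filter (fun S => insert c (T j) ⊆ S), rV S) := by
              rw [Finset.sum_const, nsmul_eq_mul, hcardout]
              congr 1
              push_cast [Nat.cast_sub hjm.le]
              ring
          _ ≤ _ := Finset.sum_le_sum h4
      -- the choose identity
      have hid : (m - j) * Nat.choose (m - (j+1)) (k - (j+1)) = Nat.choose (m - j) (k - j) * (k - j) := by
        obtain ⟨a, ha⟩ : ∃ a, m - j = a + 1 := ⟨m - j - 1, by omega⟩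
        obtain ⟨b, hb⟩ : ∃ b, k - j = b + 1 := ⟨k - j - 1, by omega⟩
        have ha' : m - (j+1) = a := by omega
        have hb' : k - (j+1) = b := by omega
        rw [ha, hb, ha', hb']
        exact Nat.add_one_mul_choose_eq a b
      have hmj : (0:ℝ) < (m:ℝ) - j := by
        have : (j:ℝ) < (m:ℝ) := by exact_mod_cast hjm
        linarith
      rw [hAsucc]
      rw [← mul_le_mul_iff_right₀ hmj]
      calc ((m:ℝ) - j) * (∑ S ∈ Pk.filter (fun S => insert c (T j) ⊆ S), rV S)
          ≤ ((k:ℝ) - j) * A j := hsumineq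
        _ ≤ ((k:ℝ) - j) * (q * (Nat.choose (m - j) (k - j) : ℝ)) := by
            apply mul_le_mul_of_nonneg_left hAle
            have : (j:ℝ) ≤ (k:ℝ) := by exact_mod_cast hj.le
            linarith
        _ = ((m:ℝ) - j) * (q * (Nat.choose (m - (j+1)) (k - (j+1)) : ℝ)) := by
            have hcast : ((m:ℝ) - j) * (Nat.choose (m - (j+1)) (k - (j+1)) : ℝ)
                = (Nat.choose (m - j) (k - j) : ℝ) * ((k:ℝ) - j) := by
              have h5 : ((m - j : ℕ) : ℝ) * ((Nat.choose (m - (j+1)) (k - (j+1)) : ℕ) : ℝ)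
                  = ((Nat.choose (m - j) (k - j) : ℕ) : ℝ) * ((k - j : ℕ) : ℝ) := by
                exact_mod_cast congrArg Nat.cast hid
              rw [Nat.cast_sub hjm.le, Nat.cast_sub hj.le] at h5
              exact h5
            calc ((k:ℝ) - j) * (q * (Nat.choose (m - j) (k - j) : ℝ))
                = q * ((Nat.choose (m - j) (k - j) : ℝ) * ((k:ℝ) - j)) := by ring
              _ = q * (((m:ℝ) - j) * (Nat.choose (m - (j+1)) (k - (j+1)) : ℝ)) := by rw [← hcast]
              _ = ((m:ℝ) - j) * (q * (Nat.choose (m - (j+1)) (k - (j+1)) : ℝ)) := by ring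
  -- conclusion
  constructor
  · intro j hj
    have hchoosepos : (0:ℝ) < (Nat.choose (m - j) (k - j) : ℝ) := by
      exact_mod_cast Nat.choose_pos (by omega)
    rw [div_le_iff₀ hchoosepos]
    exact (key j hj).2
  · have hTk : Pk.filter (fun S => T k ⊆ S) = {T k} := by
      have hTkcard : (T k).card = k := (key k le_rfl).1
      ext S
      simp only [mem_filter, mem_singleton, hPkdef, mem_powersetCard]
      constructor
      · rintro ⟨⟨-, hScard⟩, hTS⟩
        exact (Finset.eq_of_subset_of_card_le hTS (by rw [hScard, hTkcard])).symm
      · rintro rfl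
        exact ⟨⟨subset_univ _, hTkcard⟩, subset_rfl⟩
    have hAk : A k = rV (T k) := by
      rw [hAdef]
      simp only [hTk, Finset.sum_singleton]
    have := (key k le_rfl).2
    rw [hAk, Nat.sub_self, Nat.choose_zero_right, Nat.cast_one, mul_one] at this
    exact this
end

section
/- If a committee T of size k lies in the α-approximate core, then its 1-Borda score satisfies r_V(T) ≤ α·(m−k)/k + 1 ≤ α·((k+1)/k)·((m+1)/(k+1)). -/
/-- If a size-`k` committee `T` lies in the `α`-approximate core (no candidate outside `T`
is strictly preferred to all of `T` by at least `α·n/k` voters), then its 1-Borda score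
satisfies `r_V(T) ≤ α(m−k)/k + 1 ≤ α·((k+1)/k)·((m+1)/(k+1))`. -/
theorem core_implies_borda_bound {C V : Type} [Fintype C] [Fintype V] [Nonempty V]
    [DecidableEq C] [DecidableEq V]
    (m k : ℕ) (hm : Fintype.card C = m) (hk : 1 ≤ k) (hkm : k < m)
    (r : V → C ≃ Fin m)
    (T : Finset C) (hT : T.card = k) (hTne : T.Nonempty)
    (α : ℝ) (hα : 1 ≤ α)
    (hcore : ∀ c ∉ T,
      ¬ (((Finset.univ.filter (fun v : V =>
            (r v c : ℕ) + 1 < T.inf' hTne (fun c' => (r v c' : ℕ) + 1))).card : ℝ)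
          ≥ α * (Fintype.card V : ℝ) / (k : ℝ))) :
    (∑ v : V, ((T.inf' hTne (fun c' => (r v c' : ℕ) + 1) : ℕ) : ℝ)) / (Fintype.card V : ℝ)
        ≤ α * ((m : ℝ) - (k : ℝ)) / (k : ℝ) + 1 ∧
    α * ((m : ℝ) - (k : ℝ)) / (k : ℝ) + 1
        ≤ α * (((k : ℝ) + 1) / (k : ℝ)) * (((m : ℝ) + 1) / ((k : ℝ) + 1)) := by
  classical
  set f : V → ℕ := fun v => T.inf' hTne (fun c' => (r v c' : ℕ) + 1) with hf
  have hf1 : ∀ v, 1 ≤ f v := fun v => Finset.le_inf' hTne _ (fun c _ => Nat.succ_le_succ (Nat.zero_le _))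
  have hfm : ∀ v, f v ≤ m := by
    intro v
    obtain ⟨c₀, hc₀⟩ := hTne
    exact le_trans (Finset.inf'_le _ hc₀) (Nat.succ_le_of_lt (by simpa using (r v c₀).isLt))
  -- cardinality of strictly-preferred candidates per voter
  have hcardv : ∀ v : V,
      (Finset.univ.filter (fun c : C => (r v c : ℕ) + 1 < f v)).card = f v - 1 := by
    intro v
    have ht : f v - 1 ≤ m := le_trans (Nat.sub_le _ _) (hfm v)
    have hlt : ∀ a ∈ Finset.range (f v - 1), a < m := fun a ha =>
      lt_of_lt_of_le (Finset.mem_range.mp ha) ht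
    have himg : (Finset.univ.filter (fun c : C => (r v c : ℕ) + 1 < f v))
        = Finset.image (r v).symm ((Finset.range (f v - 1)).attachFin hlt) := by
      ext c
      simp only [Finset.mem_filter, Finset.mem_univ, true_and, Finset.mem_image,
        Finset.mem_attachFin, Finset.mem_range]
      constructor
      · intro h
        refine ⟨r v c, ?_, by simp⟩
        omega
      · rintro ⟨i, hi, rfl⟩
        simp only [Equiv.apply_symm_apply]
        omega
    rw [himg, Finset.card_image_of_injective _ (r v).symm.injective,
      Finset.card_attachFin, Finset.card_range]
  -- preferred candidates are outside T
  have hout : ∀ v (c : C), (r v c : ℕ) + 1 < f v → c ∉ T := by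
    intro v c h hc
    have h2 : f v ≤ (r v c : ℕ) + 1 := Finset.inf'_le _ hc
    omega
  -- double counting
  have hswap : ∑ c ∈ Tᶜ, (Finset.univ.filter (fun v : V => (r v c : ℕ) + 1 < f v)).card
      = ∑ v : V, (f v - 1) := by
    calc ∑ c ∈ Tᶜ, (Finset.univ.filter (fun v : V => (r v c : ℕ) + 1 < f v)).card
        = ∑ c ∈ Tᶜ, ∑ v : V, if (r v c : ℕ) + 1 < f v then 1 else 0 := by
          simp only [Finset.card_filter]
      _ = ∑ v : V, ∑ c ∈ Tᶜ, if (r v c : ℕ) + 1 < f v then 1 else 0 :=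
          Finset.sum_comm
      _ = ∑ v : V, (Tᶜ.filter (fun c : C => (r v c : ℕ) + 1 < f v)).card := by
          simp only [Finset.card_filter]
      _ = ∑ v : V, (f v - 1) := by
          refine Finset.sum_congr rfl fun v _ => ?_
          rw [← hcardv v]
          congr 1
          ext c
          simp only [Finset.mem_filter, Finset.mem_compl, Finset.mem_univ, true_and,
            and_iff_right_iff_imp]
          exact fun h => hout v c h
  set n : ℕ := Fintype.card V with hn
  have hnpos : 0 < n := Fintype.card_pos
  have hkR : (0:ℝ) < (k:ℝ) := by exact_mod_cast hk
  have hnR : (0:ℝ) < (n:ℝ) := by exact_mod_cast hnpos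
  -- total sum in ℕ
  have htot : ∑ v : V, f v = (∑ v : V, (f v - 1)) + n := by
    calc ∑ v : V, f v = ∑ v : V, ((f v - 1) + 1) := by
          refine Finset.sum_congr rfl fun v _ => ?_
          have := hf1 v; omega
      _ = (∑ v : V, (f v - 1)) + ∑ _v : V, 1 := Finset.sum_add_distrib
      _ = (∑ v : V, (f v - 1)) + n := by simp [hn]
  -- T complement card
  have hToc : Tᶜ.card = m - k := by
    rw [Finset.card_compl, hT, hm]
  have hTocne : Tᶜ.Nonempty := by
    rw [← Finset.card_pos, hToc]; omega
  -- strict bound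
  have hbound : ((∑ v : V, (f v - 1) : ℕ) : ℝ) < ((m - k : ℕ) : ℝ) * (α * n / k) := by
    rw [← hswap]
    push_cast
    calc (∑ c ∈ Tᶜ, ((Finset.univ.filter (fun v : V => (r v c : ℕ) + 1 < f v)).card : ℝ))
        < ∑ _c ∈ Tᶜ, α * n / k := by
          refine Finset.sum_lt_sum_of_nonempty hTocne fun c hc => ?_
          have := hcore c (Finset.mem_compl.mp hc)
          push_neg at this
          exact this
      _ = ((m - k : ℕ) : ℝ) * (α * n / k) := by
          rw [Finset.sum_const, hToc, nsmul_eq_mul]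
  have hmk : ((m - k : ℕ) : ℝ) = (m : ℝ) - (k : ℝ) := by
    have : k ≤ m := le_of_lt hkm
    push_cast [this]; ring
  have hsum : (∑ v : V, ((f v : ℕ) : ℝ)) < ((m:ℝ) - k) * (α * n / k) + n := by
    have : (∑ v : V, ((f v : ℕ) : ℝ)) = ((∑ v : V, (f v - 1) : ℕ) : ℝ) + n := by
      exact_mod_cast htot
    rw [this, ← hmk]
    linarith
  constructor
  · rw [div_le_iff₀ hnR]
    have : (α * ((m:ℝ) - k) / k + 1) * n = ((m:ℝ) - k) * (α * n / k) + n := by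
      field_simp
    rw [this]
    exact le_of_lt hsum
  · have heq : α * (((k : ℝ) + 1) / (k : ℝ)) * (((m : ℝ) + 1) / ((k : ℝ) + 1))
        = α * ((m:ℝ) + 1) / k := by
      field_simp
    rw [heq, div_add' _ _ _ hkR.ne', div_le_div_iff₀ hkR hkR]
    have hmR : (k:ℝ) + 1 ≤ (m:ℝ) := by exact_mod_cast hkm
    nlinarith [mul_nonneg (sub_nonneg.2 hα) hkR.le]
end

section
/- In the s-Borda greedy analysis: for a committee T_k of size k ≥ s, let ρ_{v,s} denote the rank of v's s-th most-preferred member of T_k, let R_k = (1/n)Σ_v ρ_{v,s}, and X_k = r_V(T_k) be the s-Borda score. Then Σ_{c ∉ T_k}(r_V(T_k) − r_V(T_k ∪ {c})) + (s·R_k − X_k) = (1/(2n))·Σ_v ρ_{v,s}(ρ_{v,s} − 1). -/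
open List Finset

lemma oi_take_lt (L : List ℕ) : ∀ (s b : ℕ), L.Pairwise (· < ·) → 1 ≤ s → s ≤ L.length →
    b < L.getD (s-1) 0 →
    ((L.orderedInsert (· ≤ ·) b).take s).sum + L.getD (s-1) 0 = (L.take s).sum + b := by
  induction L with
  | nil => intro s b _ hs hsl _; simp at hsl; omega
  | cons h t ih =>
    intro s b hL hs hsl hb
    obtain ⟨s', rfl⟩ : ∃ s', s = s' + 1 := ⟨s - 1, by omega⟩
    simp only [Nat.add_sub_cancel] at hb ⊢
    rw [List.pairwise_cons] at hL
    rcases s' with _ | s''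
    · simp only [List.getD_cons_zero] at hb ⊢
      rw [List.orderedInsert_cons_of_le _ _ hb.le]
      simp
      omega
    · simp only [List.getD_cons_succ] at hb ⊢
      simp only [List.length_cons, Nat.add_le_add_iff_right] at hsl
      have hs'' : s'' < t.length := by omega
      by_cases hbh : b ≤ h
      · rw [List.orderedInsert_cons_of_le _ _ hbh]
        rw [List.take_succ_cons, List.take_succ_cons, List.take_succ_cons, List.sum_cons,
          List.sum_cons, List.sum_cons]
        have := List.sum_take_succ t s'' hs''
        rw [List.getD_eq_getElem t 0 hs'']
        omega
      · rw [List.orderedInsert, if_neg hbh]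
        rw [List.take_succ_cons, List.take_succ_cons, List.sum_cons, List.sum_cons]
        have := ih (s''+1) b hL.2 (by omega) (by omega) (by simpa using hb)
        simp only [Nat.add_sub_cancel] at this
        omega

lemma oi_take_ge (L : List ℕ) : ∀ (s b : ℕ), L.Pairwise (· < ·) → 1 ≤ s → s ≤ L.length →
    L.getD (s-1) 0 ≤ b → b ∉ L →
    ((L.orderedInsert (· ≤ ·) b).take s) = L.take s := by
  induction L with
  | nil => intro s b _ hs hsl _ _; simp at hsl; omega
  | cons h t ih =>
    intro s b hL hs hsl hb hbL
    obtain ⟨s', rfl⟩ : ∃ s', s = s' + 1 := ⟨s - 1, by omega⟩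
    simp only [Nat.add_sub_cancel] at hb ⊢
    rw [List.pairwise_cons] at hL
    simp only [List.length_cons, Nat.add_le_add_iff_right] at hsl
    have hhb : h < b := by
      rcases s' with _ | s''
      · simp only [List.getD_cons_zero] at hb
        rcases lt_or_eq_of_le hb with h' | h'
        · exact h'
        · exact absurd (h' ▸ (List.mem_cons_self (a := h) (l := t))) hbL
      · simp only [List.getD_cons_succ] at hb
        have hs'' : s'' < t.length := by omega
        have hmem : t.getD s'' 0 ∈ t := by
          rw [List.getD_eq_getElem t 0 hs'']; exact List.getElem_mem _
        exact lt_of_lt_of_le (hL.1 _ hmem) hb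
      
    rw [List.orderedInsert, if_neg (by omega)]
    rcases s' with _ | s''
    · simp
    · rw [List.take_succ_cons, List.take_succ_cons]
      congr 1
      exact ih (s''+1) b hL.2 (by omega) (by omega) (by simpa using hb)
        (fun hm => hbL (List.mem_cons_of_mem _ hm))

lemma take_eq_filter (L : List ℕ) : ∀ (s : ℕ), L.Pairwise (· < ·) → 1 ≤ s → s ≤ L.length →
    L.take s = L.filter (fun x => decide (x ≤ L.getD (s-1) 0)) := by
  induction L with
  | nil => intro s _ hs hsl; simp at hsl; omega
  | cons h t ih =>
    intro s hL hs hsl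
    obtain ⟨s', rfl⟩ : ∃ s', s = s' + 1 := ⟨s - 1, by omega⟩
    simp only [Nat.add_sub_cancel]
    rw [List.pairwise_cons] at hL
    simp only [List.length_cons, Nat.add_le_add_iff_right] at hsl
    rcases s' with _ | s''
    · simp only [List.getD_cons_zero, List.take_succ_cons, List.take_zero]
      rw [List.filter_cons_of_pos (by simp)]
      congr 1
      symm
      rw [List.filter_eq_nil_iff]
      intro a ha
      simpa using (hL.1 a ha).not_ge
    · have hs'' : s'' < t.length := by omega
      have hmem : t.getD s'' 0 ∈ t := by
        rw [List.getD_eq_getElem t 0 hs'']; exact List.getElem_mem _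
      simp only [List.getD_cons_succ, List.take_succ_cons]
      rw [List.filter_cons_of_pos (by simpa using (hL.1 _ hmem).le)]
      congr 1
      have := ih (s''+1) hL.2 (by omega) (by omega)
      simpa using this


lemma sort_insert_eq (A : Finset ℕ) (b : ℕ) (hb : b ∉ A) :
    (insert b A).sort (· ≤ ·) = (A.sort (· ≤ ·)).orderedInsert (· ≤ ·) b := by
  have hperm : (A.sort (· ≤ ·)).orderedInsert (· ≤ ·) b ~ b :: A.sort (· ≤ ·) :=
    List.perm_orderedInsert _ _ _
  have hnd : ((A.sort (· ≤ ·)).orderedInsert (· ≤ ·) b).Nodup :=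
    hperm.nodup_iff.mpr (List.nodup_cons.mpr ⟨by simpa using hb, Finset.sort_nodup _ _⟩)
  have htf : ((A.sort (· ≤ ·)).orderedInsert (· ≤ ·) b).toFinset = insert b A := by
    rw [List.toFinset_eq_of_perm _ _ hperm, List.toFinset_cons, Finset.sort_toFinset]
  rw [← htf]
  rw [List.toFinset_sort _ hnd]
  exact List.Pairwise.orderedInsert _ _ (Finset.pairwise_sort _ _)

lemma master (m s : ℕ) (hs : 1 ≤ s) (A : Finset ℕ)
    (hA : A ⊆ (Finset.range m).image (· + 1)) (hcard : s ≤ A.card) :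
    (∑ b ∈ ((Finset.range m).image (· + 1)) \ A,
        ((((A.sort (· ≤ ·)).take s).sum : ℝ) - ((((insert b A).sort (· ≤ ·)).take s).sum : ℝ)))
      + ((s : ℝ) * ((A.sort (· ≤ ·)).getD (s-1) 0 : ℝ) - (((A.sort (· ≤ ·)).take s).sum : ℝ))
      = ((A.sort (· ≤ ·)).getD (s-1) 0 : ℝ) * (((A.sort (· ≤ ·)).getD (s-1) 0 : ℝ) - 1) / 2 := by
  set U : Finset ℕ := (Finset.range m).image (· + 1) with hU
  set L : List ℕ := A.sort (· ≤ ·) with hL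
  set ρ : ℕ := L.getD (s-1) 0 with hρ
  set sc : ℕ := (L.take s).sum with hsc
  have hLs : L.Pairwise (· < ·) := (Finset.sortedLT_sort A).pairwise
  have hlen : L.length = A.card := Finset.length_sort _
  have hsL : s ≤ L.length := by omega
  have hs1L : s - 1 < L.length := by omega
  have hρL : ρ ∈ L := by
    rw [hρ, List.getD_eq_getElem L 0 hs1L]; exact List.getElem_mem _
  have hρA : ρ ∈ A := (Finset.mem_sort _).1 hρL
  have hρU := hA hρA
  have hρm : ρ ≤ m ∧ 1 ≤ ρ := by
    rw [hU] at hρU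
    obtain ⟨i, hi, hiρ⟩ := Finset.mem_image.1 hρU
    simp only [Finset.mem_range] at hi
    omega
  have htf := take_eq_filter L s hLs hs hsL
  rw [← hρ] at htf
  have hscins : ∀ b, b ∉ A → b < ρ →
      ((((insert b A).sort (· ≤ ·)).take s).sum : ℕ) + ρ = sc + b := by
    intro b hbA hlt
    rw [sort_insert_eq A b hbA, ← hL]
    have := oi_take_lt L s b hLs hs hsL (by rw [← hρ]; exact hlt)
    rw [← hρ, ← hsc] at this
    exact this
  have hscins2 : ∀ b, b ∉ A → ρ ≤ b →
      ((((insert b A).sort (· ≤ ·)).take s).sum : ℕ) = sc := by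
    intro b hbA hge
    have hbL : b ∉ L := fun h => hbA ((Finset.mem_sort _).1 h)
    rw [sort_insert_eq A b hbA, ← hL]
    rw [oi_take_ge L s b hLs hs hsL (by rw [← hρ]; exact hge) hbL, ← hsc]
  clear_value ρ sc
  have hndf : (L.filter (fun x => decide (x ≤ ρ))).Nodup := (Finset.sort_nodup _ _).filter _
  have hFt : A.filter (fun x => x ≤ ρ) = (L.filter (fun x => decide (x ≤ ρ))).toFinset := by
    rw [List.toFinset_filter, hL, Finset.sort_toFinset]
    simp
  have hFcard : (A.filter (fun x => x ≤ ρ)).card = s := by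
    rw [hFt, List.toFinset_card_of_nodup hndf, ← htf, List.length_take]
    omega
  have hFsum : ∑ x ∈ A.filter (fun x => x ≤ ρ), x = sc := by
    rw [hFt, List.sum_toFinset _ hndf]
    simp only [List.map_id']
    rw [← htf, hsc]
  set Alt : Finset ℕ := A.filter (fun x => x < ρ) with hAlt
  have hρAlt : ρ ∉ Alt := by simp [hAlt]
  have hinsF : A.filter (fun x => x ≤ ρ) = insert ρ Alt := by
    ext x
    simp only [Finset.mem_filter, Finset.mem_insert, hAlt]
    constructor
    · rintro ⟨hx, hxρ⟩
      rcases eq_or_lt_of_le hxρ with h' | h'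
      · exact Or.inl h'
      · exact Or.inr ⟨hx, h'⟩
    · rintro (rfl | ⟨hx, h'⟩)
      · exact ⟨hρA, le_rfl⟩
      · exact ⟨hx, h'.le⟩
  have hAltcard : Alt.card + 1 = s := by
    rw [← hFcard, hinsF, Finset.card_insert_of_notMem hρAlt]
  have hAltsum : ∑ x ∈ Alt, x + ρ = sc := by
    rw [← hFsum, hinsF, Finset.sum_insert hρAlt]
    omega
  set W : Finset ℕ := U.filter (fun x => x < ρ) with hW
  have hWim : W = (Finset.range (ρ-1)).image (· + 1) := by
    ext x
    simp only [hW, hU, Finset.mem_filter, Finset.mem_image, Finset.mem_range]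
    constructor
    · rintro ⟨⟨i, hi, rfl⟩, hlt⟩; exact ⟨i, by omega, rfl⟩
    · rintro ⟨i, hi, rfl⟩
      exact ⟨⟨i, by omega, rfl⟩, by omega⟩
  have hinj1 : Function.Injective (· + 1 : ℕ → ℕ) := add_left_injective 1
  have hWcard : W.card = ρ - 1 := by
    rw [hWim, Finset.card_image_of_injective _ hinj1, Finset.card_range]
  have hWsum : 2 * ∑ x ∈ W, x = ρ * (ρ - 1) := by
    rw [hWim, Finset.sum_image (fun a _ b _ h => hinj1 h)]
    rw [Finset.sum_add_distrib, Finset.sum_const, Finset.card_range, smul_eq_mul, mul_one]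
    have hg := Finset.sum_range_id_mul_two (ρ - 1)
    obtain ⟨hm1, h1⟩ := hρm
    obtain ⟨n, rfl⟩ : ∃ n, ρ = n + 1 := ⟨ρ - 1, by omega⟩
    simp only [Nat.add_sub_cancel] at hg ⊢
    rcases n with _ | kk
    · simp
    · rw [Nat.add_sub_cancel] at hg
      have : (kk + 1 + 1) * (kk+1) = (kk+1) * kk + 2 * (kk+1) := by ring
      omega
  have hsplit1 : W.filter (fun x => x ∈ A) = Alt := by
    ext x
    simp only [hW, hAlt, Finset.mem_filter]
    constructor
    · rintro ⟨⟨_, h2⟩, h3⟩; exact ⟨h3, h2⟩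
    · rintro ⟨h1, h2⟩; exact ⟨⟨hA h1, h2⟩, h1⟩
  have hsplit2 : W.filter (fun x => x ∉ A) = (U \ A).filter (fun x => x < ρ) := by
    ext x
    simp only [hW, Finset.mem_filter, Finset.mem_sdiff]
    tauto
  set B1 : Finset ℕ := (U \ A).filter (fun x => x < ρ) with hB1
  have hcardsplit : Alt.card + B1.card = ρ - 1 := by
    rw [← hWcard, ← hsplit1, ← hsplit2]
    exact Finset.card_filter_add_card_filter_not _
  have hsumsplit : ∑ x ∈ Alt, x + ∑ x ∈ B1, x = ∑ x ∈ W, x := by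
    rw [← hsplit1, ← hsplit2]
    exact Finset.sum_filter_add_sum_filter_not W _ _
  have e0 := Finset.sum_filter_add_sum_filter_not (U \ A) (fun x => x < ρ)
    (fun b => ((sc : ℝ) - ((((insert b A).sort (· ≤ ·)).take s).sum : ℝ)))
  have e1 : ∑ b ∈ (U \ A).filter (fun x => x < ρ),
      ((sc : ℝ) - ((((insert b A).sort (· ≤ ·)).take s).sum : ℝ))
      = ∑ b ∈ B1, ((ρ : ℝ) - (b : ℝ)) := by
    rw [← hB1]
    refine Finset.sum_congr rfl (fun b hb => ?_)
    rw [hB1] at hb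
    obtain ⟨hbUA, hblt⟩ := Finset.mem_filter.1 hb
    obtain ⟨hbU, hbA⟩ := Finset.mem_sdiff.1 hbUA
    have h := hscins b hbA hblt
    have h2 : ((((insert b A).sort (· ≤ ·)).take s).sum : ℝ) + (ρ : ℝ) = (sc : ℝ) + (b : ℝ) := by
      exact_mod_cast congrArg (Nat.cast : ℕ → ℝ) h
    linarith
  have e2 : ∑ b ∈ (U \ A).filter (fun x => ¬ x < ρ),
      ((sc : ℝ) - ((((insert b A).sort (· ≤ ·)).take s).sum : ℝ)) = 0 := by
    refine Finset.sum_eq_zero (fun b hb => ?_)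
    obtain ⟨hbUA, hblt⟩ := Finset.mem_filter.1 hb
    obtain ⟨hbU, hbA⟩ := Finset.mem_sdiff.1 hbUA
    rw [hscins2 b hbA (by omega)]
    ring
  rw [← e0, e1, e2, add_zero]
  rw [Finset.sum_sub_distrib, Finset.sum_const, nsmul_eq_mul]
  obtain ⟨hm1, h1ρ⟩ := hρm
  have c1 : (Alt.card : ℝ) + (B1.card : ℝ) = (ρ : ℝ) - 1 := by
    have h2 := congrArg (Nat.cast : ℕ → ℝ) hcardsplit
    push_cast [Nat.cast_sub h1ρ] at h2
    linarith
  have c2 : (∑ x ∈ Alt, (x : ℝ)) + (∑ x ∈ B1, (x : ℝ)) = ∑ x ∈ W, (x : ℝ) := by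
    have h2 := congrArg (Nat.cast : ℕ → ℝ) hsumsplit
    push_cast at h2
    exact h2
  have c3 : 2 * (∑ x ∈ W, (x : ℝ)) = (ρ : ℝ) * ((ρ : ℝ) - 1) := by
    have h2 := congrArg (Nat.cast : ℕ → ℝ) hWsum
    push_cast [Nat.cast_sub h1ρ] at h2
    linarith
  have c4 : (∑ x ∈ Alt, (x : ℝ)) + (ρ : ℝ) = (sc : ℝ) := by
    have h2 := congrArg (Nat.cast : ℕ → ℝ) hAltsum
    push_cast at h2
    exact h2
  have c5 : (Alt.card : ℝ) + 1 = (s : ℝ) := by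
    have h2 := congrArg (Nat.cast : ℕ → ℝ) hAltcard
    push_cast at h2
    exact h2
  linear_combination (ρ : ℝ) * c1 - (ρ : ℝ) * c5 - c2 + c4 - (1/2) * c3

/-- The `s`-Borda greedy identity: for a committee `T` of size `k ≥ s`, with
`ρ v` the rank of voter `v`'s `s`-th most-preferred member of `T`,
`R = (1/n) Σ_v ρ v`, and `X = r_V(T)` the average `s`-Borda score (sum of the `s`
smallest ranks within the committee), we have
`Σ_{c ∉ T}(r_V(T) − r_V(T ∪ {c})) + (s·R − X) = (1/(2n)) Σ_v ρ_v(ρ_v − 1)`. -/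
theorem s_borda_greedy_identity {C V : Type} [Fintype C] [Fintype V] [Nonempty V]
    [DecidableEq C]
    (m k s : ℕ) (hm : Fintype.card C = m) (hs : 1 ≤ s)
    (r : V → C ≃ Fin m)
    (T : Finset C) (hT : T.card = k) (hsk : s ≤ k) (hkm : k < m)
    (rV : Finset C → ℝ)
    (hrV : ∀ S : Finset C, rV S =
      (∑ v : V, (((((S.image (fun c => (r v c : ℕ) + 1)).sort (· ≤ ·)).take s).sum : ℕ) : ℝ))
        / (Fintype.card V : ℝ))
    (ρ : V → ℕ)
    (hρ : ∀ v : V, ρ v = ((T.image (fun c => (r v c : ℕ) + 1)).sort (· ≤ ·)).getD (s - 1) 0)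
    (R X : ℝ)
    (hR : R = (∑ v : V, (ρ v : ℝ)) / (Fintype.card V : ℝ))
    (hX : X = rV T) :
    (∑ c ∈ Tᶜ, (rV T - rV (insert c T))) + ((s : ℝ) * R - X)
      = (∑ v : V, (ρ v : ℝ) * ((ρ v : ℝ) - 1)) / (2 * (Fintype.card V : ℝ)) := by
  have hn : (0:ℝ) < (Fintype.card V : ℝ) := by exact_mod_cast Fintype.card_pos
  have key : ∀ v : V,
      (∑ c ∈ Tᶜ,
        (((((T.image (fun c => (r v c : ℕ) + 1)).sort (· ≤ ·)).take s).sum : ℝ)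
          - (((((insert c T).image (fun c => (r v c : ℕ) + 1)).sort (· ≤ ·)).take s).sum : ℝ)))
        + ((s : ℝ) * (ρ v : ℝ)
            - ((((T.image (fun c => (r v c : ℕ) + 1)).sort (· ≤ ·)).take s).sum : ℝ))
      = (ρ v : ℝ) * ((ρ v : ℝ) - 1) / 2 := by
    intro v
    set f : C → ℕ := fun c => (r v c : ℕ) + 1 with hf
    have hfinj : Function.Injective f := by
      intro a b h
      simp only [hf] at h
      have h2 : (r v a : ℕ) = (r v b : ℕ) := by omega
      exact (r v).injective (Fin.val_injective h2)
    have hAsub : T.image f ⊆ (Finset.range m).image (· + 1) := by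
      intro x hx
      obtain ⟨c, hc, rfl⟩ := Finset.mem_image.1 hx
      exact Finset.mem_image.2 ⟨(r v c : ℕ), Finset.mem_range.2 (r v c).isLt, rfl⟩
    have hAcard : s ≤ (T.image f).card := by
      rw [Finset.card_image_of_injective _ hfinj, hT]; exact hsk
    have himg : Tᶜ.image f = ((Finset.range m).image (· + 1)) \ (T.image f) := by
      ext j
      simp only [Finset.mem_image, Finset.mem_sdiff, Finset.mem_compl, Finset.mem_range]
      constructor
      · rintro ⟨c, hc, rfl⟩
        refine ⟨⟨(r v c : ℕ), (r v c).isLt, rfl⟩, ?_⟩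
        rintro ⟨c', hc', hcc⟩
        exact hc (hfinj hcc ▸ hc')
      · rintro ⟨⟨i, hi, rfl⟩, hnA⟩
        refine ⟨(r v).symm ⟨i, hi⟩, ?_, ?_⟩
        · intro hmem
          exact hnA ⟨_, hmem, by simp [hf]⟩
        · simp [hf]
    have hmast := master m s hs (T.image f) hAsub hAcard
    rw [← himg, Finset.sum_image (fun a _ b _ h => hfinj h)] at hmast
    rw [hρ v]
    have hrw : ∑ c ∈ Tᶜ,
        (((((T.image f).sort (· ≤ ·)).take s).sum : ℝ)
          - ((((insert (f c) (T.image f)).sort (· ≤ ·)).take s).sum : ℝ))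
        = ∑ c ∈ Tᶜ,
        (((((T.image f).sort (· ≤ ·)).take s).sum : ℝ)
          - (((((insert c T).image f).sort (· ≤ ·)).take s).sum : ℝ)) := by
      refine Finset.sum_congr rfl (fun c _ => ?_)
      rw [Finset.image_insert]
    rw [hrw] at hmast
    exact hmast
  rw [hX, hR]
  simp only [hrV]
  simp only [← sub_div, ← mul_div_assoc, ← Finset.sum_div, ← add_div, ← Finset.sum_sub_distrib]
  rw [div_eq_div_iff hn.ne' (by positivity)]
  have hsum := Finset.sum_congr (rfl : (Finset.univ : Finset V) = Finset.univ) (fun v _ => key v)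
  rw [Finset.sum_add_distrib, Finset.sum_sub_distrib, Finset.sum_comm, ← Finset.mul_sum,
    ← Finset.sum_div] at hsum
  linear_combination (2 * (Fintype.card V : ℝ)) * hsum
end

section
/- Define a sequence of reals by the s-Borda greedy recurrence: fix reals m > 0 and integer s ≥ 1; suppose x_s ≤ 2s²(m+1)/(s+1) and for each k > s, if x_{k−1} > 2s²(m+1)/(k+1) then x_k ≤ x_{k−1} − x_{k−1}²/(2(m+1)s²); otherwise x_k ≤ x_{k−1}. Then x_k ≤ 2s²(m+1)/(k+1) for all k ≥ s. -/
lemma s_borda_aux (a c nn : ℝ) (ha : 0 ≤ a) (hc : 0 < c) (hn : 1 ≤ nn)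
    (hub : a * (nn + 1) ≤ c) : (a * c - a ^ 2) * (nn + 2) ≤ c ^ 2 := by
  nlinarith [sq_nonneg (c - a * (nn + 1)),
    mul_nonneg (mul_nonneg ha (sub_nonneg.2 hub)) (le_trans zero_le_one hn), sq_nonneg a]

/-- The `s`-Borda greedy recurrence: for a positive real `m`, integer `s ≥ 1`, if
`x s ≤ 2s²(m+1)/(s+1)` and for each `k > s`, `x k ≤ x (k−1) − x(k−1)²/(2(m+1)s²)`
whenever `x (k−1) > 2s²(m+1)/(k+1)`, and `x k ≤ x (k−1)` otherwise, then
`x k ≤ 2s²(m+1)/(k+1)` for all `k ≥ s`. -/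
theorem s_borda_greedy_recurrence (m : ℝ) (hm : 0 < m) (s : ℕ) (hs : 1 ≤ s)
    (x : ℕ → ℝ) (hx : ∀ k, 0 ≤ x k)
    (hbase : x s ≤ 2 * (s : ℝ) ^ 2 * (m + 1) / ((s : ℝ) + 1))
    (hrec : ∀ k, s < k →
      (x (k - 1) > 2 * (s : ℝ) ^ 2 * (m + 1) / ((k : ℝ) + 1) →
        x k ≤ x (k - 1) - (x (k - 1)) ^ 2 / (2 * (m + 1) * (s : ℝ) ^ 2)) ∧
      (x (k - 1) ≤ 2 * (s : ℝ) ^ 2 * (m + 1) / ((k : ℝ) + 1) → x k ≤ x (k - 1))) :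
    ∀ k, s ≤ k → x k ≤ 2 * (s : ℝ) ^ 2 * (m + 1) / ((k : ℝ) + 1) := by
  intro k hk
  induction k, hk using Nat.le_induction with
  | base => exact hbase
  | succ n hn ih =>
    have hs' : s < n + 1 := Nat.lt_succ_of_le hn
    obtain ⟨h1, h2⟩ := hrec (n + 1) hs'
    simp only [Nat.add_sub_cancel] at h1 h2
    push_cast at h1 h2 ⊢
    set c := 2 * (s:ℝ) ^ 2 * (m + 1) with hcdef
    have hc : (0:ℝ) < c := by positivity
    have hn1 : (1:ℝ) ≤ (n:ℝ) := by exact_mod_cast hs.trans hn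
    by_cases h : x n ≤ c / ((n:ℝ) + 1 + 1)
    · exact (h2 h).trans h
    · push_neg at h
      have h1' := h1 h
      have hub : x n * ((n:ℝ) + 1) ≤ c := (le_div_iff₀ (by linarith)).mp ih
      have hkey := s_borda_aux (x n) c (n:ℝ) (hx n) hc hn1 hub
      have hc' : 2 * (m + 1) * (s:ℝ) ^ 2 = c := by rw [hcdef]; ring
      rw [hc'] at h1'
      rw [le_div_iff₀ (by linarith : (0:ℝ) < (n:ℝ) + 1 + 1)]
      have h2' : x (n + 1) * ((n:ℝ) + 2) * c ≤ (x n - x n ^ 2 / c) * ((n:ℝ) + 2) * c :=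
        mul_le_mul_of_nonneg_right (mul_le_mul_of_nonneg_right h1' (by linarith)) hc.le
      have heq : (x n - x n ^ 2 / c) * ((n:ℝ) + 2) * c = (x n * c - x n ^ 2) * ((n:ℝ) + 2) := by
        field_simp
      have : x (n + 1) * ((n:ℝ) + 1 + 1) * c ≤ c * c := by
        rw [heq] at h2'
        nlinarith
      exact le_of_mul_le_mul_right (by nlinarith) hc
end

section
/- The probabilistic lower-bound on random instances: fix ε > 0, m, k and let n ≥ ⌈m(k+1)²/ε²⌉. If each of n voters independently has a uniformly random bijective ranking of the m candidates, then with probability greater than 1/2, every size-k committee T has 1-Borda score r_V(T) > (1−ε)·(m+1)/(k+1). (The proof uses Hoeffding's inequality on the n independent values r_v(T) ∈ [1, m], plus a union bound over the at most C(m,k) ≤ e^m committees.) -/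
set_option maxHeartbeats 1000000
open Finset

lemma card_fix {C : Type} [Fintype C] [DecidableEq C] {m : ℕ} (hm : Fintype.card C = m)
    (A : Finset C) (B : Finset (Fin m)) (f : ↥A ↪ ↥B) :
    Nat.card {σ : C ≃ Fin m // ∀ a : ↥A, σ a = (f a : Fin m)} = (m - A.card).factorial := by
  classical
  set g : ↥A → Fin m := fun a => (f a : Fin m) with hg
  have hginj : Function.Injective g := by
    intro a b hab
    exact f.injective (Subtype.ext hab)
  set e₀ : ↥(↑A : Set C) ≃ ↥(Set.range g) :=
    (Equiv.subtypeEquivRight (fun x => Finset.mem_coe)).trans (Equiv.ofInjective g hginj)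
    with he₀def
  have he₀ : ∀ x : ↥(↑A : Set C), (e₀ x : Fin m) = g ⟨x.1, x.2⟩ := fun x => rfl
  have key : {σ : C ≃ Fin m // ∀ a : ↥A, σ a = g a} ≃ (↥(↑A : Set C)ᶜ ≃ ↥(Set.range g)ᶜ) := by
    refine (Equiv.subtypeEquivRight ?_).trans (Equiv.Set.compl e₀)
    intro σ
    constructor
    · intro h x
      rw [he₀ x]
      exact h ⟨x.1, x.2⟩
    · intro h a
      have := h ⟨a.1, a.2⟩
      rwa [he₀] at this
  have hcs : Fintype.card ↥(↑A : Set C)ᶜ = m - A.card := by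
    rw [Fintype.card_compl_set, hm]
    congr 1
    simp
  have hct : Fintype.card ↥(Set.range g)ᶜ = m - A.card := by
    rw [Fintype.card_compl_set, Fintype.card_fin, Set.card_range_of_injective hginj]
    congr 1
    simp
  have hne : Nonempty (↥(↑A : Set C)ᶜ ≃ ↥(Set.range g)ᶜ) :=
    ⟨Fintype.equivOfCardEq (hcs.trans hct.symm)⟩
  rw [Nat.card_eq_fintype_card, Fintype.card_congr key,
    Fintype.card_equiv hne.some, hcs]

lemma card_mapsTo {C : Type} [Fintype C] [DecidableEq C] {m : ℕ} (hm : Fintype.card C = m)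
    (A : Finset C) (B : Finset (Fin m)) :
    Nat.card {σ : C ≃ Fin m // ∀ a ∈ A, σ a ∈ B}
      = B.card.descFactorial A.card * (m - A.card).factorial := by
  classical
  have e : {σ : C ≃ Fin m // ∀ a ∈ A, σ a ∈ B}
      ≃ Σ f : (↥A ↪ ↥B), {σ : C ≃ Fin m // ∀ a : ↥A, σ a = (f a : Fin m)} := by
    refine ⟨fun σ => ⟨⟨fun a => ⟨σ.1 a, σ.2 a a.2⟩, fun a b hab => Subtype.ext (σ.1.injective (congrArg Subtype.val hab))⟩, σ.1, fun a => rfl⟩,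
      fun p => ⟨p.2.1, fun a ha => ?_⟩, fun σ => rfl, fun p => ?_⟩
    · rw [p.2.2 ⟨a, ha⟩]
      exact (p.1 ⟨a, ha⟩).2
    · rcases p with ⟨f, σ, h⟩
      have hf : (⟨fun a => ⟨σ a, by rw [h a]; exact (f a).2⟩, fun a b hab => Subtype.ext (σ.injective (congrArg Subtype.val hab))⟩ : ↥A ↪ ↥B) = f := by
        ext a
        exact congrArg Fin.val (h a)
      refine Sigma.ext hf ((Subtype.heq_iff_coe_eq ?_).2 rfl)
      intro x
      dsimp only
      rw [hf]
  rw [Nat.card_congr e]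
  have : Nat.card (Σ f : (↥A ↪ ↥B), {σ : C ≃ Fin m // ∀ a : ↥A, σ a = (f a : Fin m)})
      = ∑ f : (↥A ↪ ↥B), Nat.card {σ : C ≃ Fin m // ∀ a : ↥A, σ a = (f a : Fin m)} := by
    simp [Nat.card_eq_fintype_card, Fintype.card_sigma]
  rw [this]
  simp only [card_fix hm A B]
  rw [Finset.sum_const, smul_eq_mul, Finset.card_univ, Fintype.card_embedding_eq,
    Fintype.card_coe, Fintype.card_coe]

lemma card_filter_ge_s19 (m j : ℕ) : (univ.filter fun x : Fin m => j ≤ (x : ℕ)).card = m - j := by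
  classical
  rw [Finset.card_filter]
  rw [Fin.sum_univ_eq_sum_range (fun i => if j ≤ i then 1 else 0) m]
  rw [← Finset.card_filter]
  have : (Finset.range m).filter (fun i => j ≤ i) = Finset.Ico j m := by
    ext i
    simp [Finset.mem_filter, Finset.mem_range, Finset.mem_Ico, and_comm]
  rw [this, Nat.card_Ico]

lemma count_ge (C : Type) [Fintype C] [DecidableEq C] {m k : ℕ} (hm : Fintype.card C = m)
    (T : Finset C) (hTk : T.card = k) (j : ℕ) :
    (univ.filter fun σ : C ≃ Fin m => ∀ c ∈ T, j ≤ (σ c : ℕ)).card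
      = (m - j).descFactorial k * (m - k).factorial := by
  classical
  have h1 : (univ.filter fun σ : C ≃ Fin m => ∀ c ∈ T, j ≤ (σ c : ℕ)).card
      = Nat.card {σ : C ≃ Fin m // ∀ c ∈ T, σ c ∈ (univ.filter fun x : Fin m => j ≤ (x : ℕ))} := by
    rw [Nat.card_eq_fintype_card, Fintype.card_subtype]
    congr 1
    apply Finset.filter_congr
    intro σ _
    simp
  rw [h1, card_mapsTo hm, card_filter_ge_s19, hTk]

lemma sum_min {C : Type} [Fintype C] [DecidableEq C] {m k : ℕ} (hm : Fintype.card C = m)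
    (hk : 1 ≤ k) (hkm : k ≤ m)
    (T : Finset C) (hT : T.Nonempty) (hTk : T.card = k) :
    (k+1) * ∑ σ : C ≃ Fin m, T.inf' hT (fun c => (σ c : ℕ) + 1)
      = (m+1) * m.factorial := by
  classical
  have cm := count_ge C hm T hTk
  have hXle : ∀ σ : C ≃ Fin m, T.inf' hT (fun c => (σ c : ℕ) + 1) ≤ m := by
    intro σ
    obtain ⟨c, hc⟩ := hT
    exact le_trans (Finset.inf'_le _ hc) (Nat.succ_le_of_lt (σ c).isLt)
  have hX : ∀ σ : C ≃ Fin m, T.inf' hT (fun c => (σ c : ℕ) + 1)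
      = ∑ j ∈ range m, if (∀ c ∈ T, j ≤ (σ c : ℕ)) then 1 else 0 := by
    intro σ
    rw [← Finset.card_filter]
    have heq : (range m).filter (fun j => ∀ c ∈ T, j ≤ (σ c : ℕ))
        = range (T.inf' hT (fun c => (σ c : ℕ) + 1)) := by
      ext j
      simp only [mem_filter, mem_range]
      rw [Finset.lt_inf'_iff]
      constructor
      · rintro ⟨hjm, hj⟩ c hc
        exact Nat.lt_succ_of_le (hj c hc)
      · intro hj
        have hjX : j < T.inf' hT (fun c => (σ c : ℕ) + 1) :=
          (Finset.lt_inf'_iff hT).mpr hj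
        exact ⟨lt_of_lt_of_le hjX (hXle σ), fun c hc => Nat.lt_succ_iff.mp (hj c hc)⟩
    rw [heq, Finset.card_range]
  have hswap : ∑ σ : C ≃ Fin m, T.inf' hT (fun c => (σ c : ℕ) + 1)
      = ∑ j ∈ range m, (m - j).descFactorial k * (m - k).factorial := by
    simp only [hX]
    rw [Finset.sum_comm]
    refine Finset.sum_congr rfl fun j _ => ?_
    rw [← Finset.card_filter, cm j]
  rw [hswap, ← Finset.sum_mul]
  have hreflect : ∑ j ∈ range m, (m - j).descFactorial k
      = ∑ j ∈ range m, (j + 1).descFactorial k := by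
    rw [← Finset.sum_range_reflect (fun j => (j + 1).descFactorial k) m]
    refine Finset.sum_congr rfl fun j hj => ?_
    rw [mem_range] at hj
    congr 1
    omega
  have hchoose : ∑ j ∈ range m, (j + 1).descFactorial k
      = k.factorial * (m + 1).choose (k + 1) := by
    simp only [Nat.descFactorial_eq_factorial_mul_choose]
    rw [← Finset.mul_sum]
    congr 1
    have h1 : ∑ j ∈ range m, (j + 1).choose k = ∑ i ∈ Icc 1 m, i.choose k := by
      rw [← Finset.Ico_add_one_right_eq_Icc, Finset.sum_Ico_eq_sum_range]
      have : m + 1 - 1 = m := by omega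
      rw [this]
      exact Finset.sum_congr rfl fun j _ => by rw [Nat.add_comm]
    rw [h1, ← Nat.sum_Icc_choose m k]
    refine (Finset.sum_subset (Finset.Icc_subset_Icc_left hk) fun i hi hni => ?_).symm
    rw [Finset.mem_Icc] at hi hni
    exact Nat.choose_eq_zero_of_lt (by omega)
  rw [hreflect, hchoose]
  have key : (m + 1).choose (k + 1) * (k + 1).factorial * ((m + 1) - (k + 1)).factorial
      = (m + 1).factorial := Nat.choose_mul_factorial_mul_factorial (by omega)
  rw [Nat.succ_sub_succ] at key
  calc (k + 1) * (k.factorial * (m + 1).choose (k + 1) * (m - k).factorial)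
      = (m + 1).choose (k + 1) * ((k + 1) * k.factorial) * (m - k).factorial := by ring
    _ = (m + 1).choose (k + 1) * (k + 1).factorial * (m - k).factorial := by
        rw [Nat.factorial_succ]
    _ = (m + 1).factorial := key
    _ = (m + 1) * m.factorial := Nat.factorial_succ m

lemma exp_quad (u : ℝ) (hu : 0 ≤ u) : Real.exp (-u) ≤ 1 - u + u^2/2 := by
  have h1 : 1 + u + u^2/2 ≤ Real.exp u := by
    have := Real.sum_le_exp_of_nonneg hu 3
    simp [Finset.sum_range_succ] at this
    linarith
  have h2 : (0:ℝ) < 1 + u + u^2/2 := by nlinarith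
  have he : (0:ℝ) < Real.exp (-u) := Real.exp_pos _
  have key : Real.exp (-u) * (1+u+u^2/2) ≤ 1 := by
    calc Real.exp (-u) * (1+u+u^2/2) ≤ Real.exp (-u) * Real.exp u := by nlinarith
      _ = 1 := by rw [← Real.exp_add]; simp
  nlinarith [sq_nonneg u, sq_nonneg (u^2), pow_pos he 1]

/-- Probabilistic lower bound on random instances: fix `ε > 0`, `1 ≤ k ≤ m`, and
`n ≥ m(k+1)²/ε²`.  If each of the `n` voters independently has a uniformly random
bijective ranking of the `m` candidates (i.e. the profile is a uniformly random element
of `Fin n → (C ≃ Fin m)`), then with probability greater than `1/2`, every size-`k`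
committee `T` has 1-Borda score greater than `(1−ε)(m+1)/(k+1)`. -/
theorem random_instance_lower_bound {C : Type} [Fintype C] [DecidableEq C]
    (m k n : ℕ) (hm : Fintype.card C = m) (hk : 1 ≤ k) (hkm : k ≤ m) (hn0 : 0 < n)
    (ε : ℝ) (hε : 0 < ε)
    (hn : (n : ℝ) ≥ (m : ℝ) * ((k : ℝ) + 1) ^ 2 / ε ^ 2) :
    ((Nat.card {R : Fin n → (C ≃ Fin m) //
        ∀ (T : Finset C) (hTne : T.Nonempty), T.card = k →
          (1 - ε) * ((m : ℝ) + 1) / ((k : ℝ) + 1)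
            < (∑ i : Fin n, ((T.inf' hTne (fun c => (R i c : ℕ) + 1) : ℕ) : ℝ)) / (n : ℝ)} : ℝ))
      / (Nat.card (Fin n → (C ≃ Fin m)) : ℝ) > 1 / 2 := by
  classical
  have hm1 : 1 ≤ m := le_trans hk hkm
  have hmR : (0:ℝ) < (m:ℝ) := by exact_mod_cast hm1
  have hkR : (1:ℝ) ≤ (k:ℝ) := by exact_mod_cast hk
  have hnR : (0:ℝ) < (n:ℝ) := by exact_mod_cast hn0
  set μ : ℝ := ((m:ℝ)+1)/((k:ℝ)+1) with hμ
  have hμpos : 0 < μ := by positivity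
  set thr : ℝ := (1 - ε) * ((m : ℝ) + 1) / ((k : ℝ) + 1) with hthr
  set t : ℝ := ε / m with htdef
  have ht : 0 < t := by positivity
  set X : Finset C → (C ≃ Fin m) → ℕ :=
    fun T σ => if h : T.Nonempty then T.inf' h (fun c => (σ c : ℕ) + 1) else 0 with hXdef
  set M : ℕ := m.factorial with hM
  have hcardEquiv : Fintype.card (C ≃ Fin m) = M := by
    rw [Fintype.card_equiv (Fintype.equivFinOfCardEq hm), hm]
  have hMpos : (0:ℝ) < (M:ℝ) := by exact_mod_cast Nat.factorial_pos m
  -- per-committee Chernoff bound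
  have key : ∀ T : Finset C, T.card = k →
      (((univ.filter fun R : Fin n → C ≃ Fin m =>
          (∑ i : Fin n, (X T (R i) : ℝ)) ≤ thr * n).card : ℝ))
        ≤ (M:ℝ)^n * Real.exp (-((m:ℝ)+1)) := by
    intro T hTk
    have hT : T.Nonempty := Finset.card_pos.mp (by rw [hTk]; exact hk)
    have hXm : ∀ σ : C ≃ Fin m, (X T σ : ℝ) ≤ m := by
      intro σ
      have : X T σ ≤ m := by
        rw [hXdef]
        simp only [dif_pos hT]
        obtain ⟨c, hc⟩ := hT
        exact le_trans (Finset.inf'_le _ hc) (Nat.succ_le_of_lt (σ c).isLt)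
      exact_mod_cast this
    have hE : ∑ σ : C ≃ Fin m, (X T σ : ℝ) = (M:ℝ) * μ := by
      have h0 := sum_min hm hk hkm T hT hTk
      have h1 : ((k:ℝ)+1) * ∑ σ : C ≃ Fin m, (X T σ : ℝ) = ((m:ℝ)+1) * (M:ℝ) := by
        have : ∀ σ : C ≃ Fin m, (X T σ : ℝ) = ((T.inf' hT (fun c => (σ c : ℕ) + 1) : ℕ) : ℝ) := by
          intro σ; rw [hXdef]; simp only [dif_pos hT]
        rw [Finset.sum_congr rfl fun σ _ => this σ]
        rw [hM]
        exact_mod_cast congrArg (Nat.cast : ℕ → ℝ) h0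
      have hk1 : ((k:ℝ)+1) ≠ 0 := by positivity
      rw [hμ]
      field_simp
      linarith [h1]
    have mgf : ∑ σ : C ≃ Fin m, Real.exp (-(t * (X T σ : ℝ)))
        ≤ (M:ℝ) * Real.exp (t^2*(m:ℝ)*μ/2 - t*μ) := by
      have step1 : ∑ σ : C ≃ Fin m, Real.exp (-(t * (X T σ : ℝ)))
          ≤ ∑ σ : C ≃ Fin m, (1 - t * (X T σ : ℝ) + t^2*(m:ℝ)*(X T σ : ℝ)/2) := by
        refine Finset.sum_le_sum fun σ _ => ?_
        have hx0 : (0:ℝ) ≤ (X T σ : ℝ) := Nat.cast_nonneg _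
        have h1 := exp_quad (t * (X T σ : ℝ)) (by positivity)
        have h2 : (t * (X T σ : ℝ))^2/2 ≤ t^2*(m:ℝ)*(X T σ : ℝ)/2 := by
          have h3 : t^2 * (X T σ : ℝ) * (X T σ : ℝ) ≤ t^2 * (X T σ : ℝ) * (m:ℝ) :=
            mul_le_mul_of_nonneg_left (hXm σ) (by positivity)
          nlinarith [h3]
        linarith
      have step2 : ∑ σ : C ≃ Fin m, (1 - t * (X T σ : ℝ) + t^2*(m:ℝ)*(X T σ : ℝ)/2)
          = (M:ℝ) * (1 - t*μ + t^2*(m:ℝ)*μ/2) := by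
        have hsum1 : ∑ _σ : C ≃ Fin m, (1:ℝ) = (M:ℝ) := by
          rw [Finset.sum_const, card_univ, hcardEquiv]; simp
        have hsum2 : ∑ σ : C ≃ Fin m, t * (X T σ : ℝ) = t * ((M:ℝ)*μ) := by
          rw [← Finset.mul_sum, hE]
        have hsum3 : ∑ σ : C ≃ Fin m, t^2*(m:ℝ)*(X T σ : ℝ)/2 = t^2*(m:ℝ)*((M:ℝ)*μ)/2 := by
          rw [← Finset.sum_div, ← Finset.mul_sum, hE]
        rw [Finset.sum_add_distrib, Finset.sum_sub_distrib, hsum1, hsum2, hsum3]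
        ring
      have step3 : (1 : ℝ) - t*μ + t^2*(m:ℝ)*μ/2 ≤ Real.exp (t^2*(m:ℝ)*μ/2 - t*μ) := by
        have := Real.add_one_le_exp (t^2*(m:ℝ)*μ/2 - t*μ)
        linarith
      calc ∑ σ : C ≃ Fin m, Real.exp (-(t * (X T σ : ℝ)))
          ≤ (M:ℝ) * (1 - t*μ + t^2*(m:ℝ)*μ/2) := by rw [← step2]; exact step1
        _ ≤ (M:ℝ) * Real.exp (t^2*(m:ℝ)*μ/2 - t*μ) := by
            exact mul_le_mul_of_nonneg_left step3 hMpos.le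
    -- Chernoff
    have cher1 : (((univ.filter fun R : Fin n → C ≃ Fin m =>
          (∑ i : Fin n, (X T (R i) : ℝ)) ≤ thr * n).card : ℝ))
        ≤ ∑ R : Fin n → C ≃ Fin m, Real.exp (t*(thr*n - ∑ i : Fin n, (X T (R i) : ℝ))) := by
      set S := univ.filter fun R : Fin n → C ≃ Fin m =>
          (∑ i : Fin n, (X T (R i) : ℝ)) ≤ thr * n with hS
      calc ((S.card : ℝ)) = ∑ R ∈ S, (1:ℝ) := by simp
        _ ≤ ∑ R ∈ S, Real.exp (t*(thr*n - ∑ i : Fin n, (X T (R i) : ℝ))) := by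
            refine Finset.sum_le_sum fun R hR => ?_
            rw [hS, mem_filter] at hR
            exact Real.one_le_exp (by nlinarith [hR.2])
        _ ≤ ∑ R : Fin n → C ≃ Fin m, Real.exp (t*(thr*n - ∑ i : Fin n, (X T (R i) : ℝ))) :=
            Finset.sum_le_sum_of_subset_of_nonneg (Finset.filter_subset _ _)
              (fun _ _ _ => (Real.exp_pos _).le)
    have cher2 : ∑ R : Fin n → C ≃ Fin m, Real.exp (t*(thr*n - ∑ i : Fin n, (X T (R i) : ℝ)))
        = Real.exp (t*thr*n) * (∑ σ : C ≃ Fin m, Real.exp (-(t * (X T σ : ℝ))))^n := by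
      have hpt : ∀ R : Fin n → C ≃ Fin m,
          Real.exp (t*(thr*n - ∑ i : Fin n, (X T (R i) : ℝ)))
            = Real.exp (t*thr*n) * ∏ i : Fin n, Real.exp (-(t * (X T (R i) : ℝ))) := by
        intro R
        rw [← Real.exp_sum, ← Real.exp_add]
        congr 1
        rw [Finset.sum_neg_distrib, ← Finset.mul_sum]
        ring
      simp only [hpt]
      rw [← Finset.mul_sum]
      congr 1
      have hps := Finset.prod_univ_sum (fun _ : Fin n => (univ : Finset (C ≃ Fin m)))
        (fun _ σ => Real.exp (-(t * (X T σ : ℝ))))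
      rw [Fintype.piFinset_univ] at hps
      rw [← hps, Finset.prod_const, Finset.card_univ, Fintype.card_fin]
    have hsum_nonneg : (0:ℝ) ≤ ∑ σ : C ≃ Fin m, Real.exp (-(t * (X T σ : ℝ))) :=
      Finset.sum_nonneg fun σ _ => (Real.exp_pos _).le
    have hexp_bound : t*thr*(n:ℝ) + (n:ℝ)*(t^2*(m:ℝ)*μ/2 - t*μ) ≤ -((m:ℝ)+1) := by
      have hthrμ : thr = (1-ε)*μ := by rw [hthr, hμ]; ring
      have hident : t*thr*(n:ℝ) + (n:ℝ)*(t^2*(m:ℝ)*μ/2 - t*μ) = -((n:ℝ)*ε^2*μ/(2*(m:ℝ))) := by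
        rw [hthrμ, htdef]
        field_simp
        ring
      rw [hident, neg_le_neg_iff]
      have h1 : (m:ℝ) * ((k:ℝ)+1)^2 ≤ (n:ℝ)*ε^2 := by
        rw [ge_iff_le, div_le_iff₀ (by positivity : (0:ℝ) < ε^2)] at hn
        linarith
      have hμval : (n:ℝ)*ε^2*μ = (n:ℝ)*ε^2*((m:ℝ)+1)/((k:ℝ)+1) := by rw [hμ]; ring
      rw [le_div_iff₀ (by positivity : (0:ℝ) < 2*(m:ℝ)), hμval,
        le_div_iff₀ (by positivity : (0:ℝ) < (k:ℝ)+1)]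
      have h2 : (m:ℝ) * ((k:ℝ)+1)^2 * ((m:ℝ)+1) ≤ (n:ℝ)*ε^2*((m:ℝ)+1) :=
        mul_le_mul_of_nonneg_right h1 (by positivity)
      have h4 : ((m:ℝ)+1)*(2*(m:ℝ))*((k:ℝ)+1) ≤ (m:ℝ)*((k:ℝ)+1)^2*((m:ℝ)+1) := by
        nlinarith [mul_nonneg (mul_nonneg (mul_nonneg hmR.le
          (by linarith : (0:ℝ) ≤ (k:ℝ)+1)) (by linarith : (0:ℝ) ≤ (m:ℝ)+1))
          (by linarith : (0:ℝ) ≤ (k:ℝ)-1)]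
      linarith [h2, h4]
    calc (((univ.filter fun R : Fin n → C ≃ Fin m =>
          (∑ i : Fin n, (X T (R i) : ℝ)) ≤ thr * n).card : ℝ))
        ≤ Real.exp (t*thr*n) * (∑ σ : C ≃ Fin m, Real.exp (-(t * (X T σ : ℝ))))^n := by
          rw [← cher2]; exact cher1
      _ ≤ Real.exp (t*thr*n) * ((M:ℝ) * Real.exp (t^2*(m:ℝ)*μ/2 - t*μ))^n := by
          refine mul_le_mul_of_nonneg_left ?_ (Real.exp_pos _).le
          exact pow_le_pow_left₀ hsum_nonneg mgf n
      _ = (M:ℝ)^n * (Real.exp (t*thr*(n:ℝ)) * Real.exp ((n:ℝ)*(t^2*(m:ℝ)*μ/2 - t*μ))) := by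
          rw [mul_pow, ← Real.exp_nat_mul]
          ring
      _ = (M:ℝ)^n * Real.exp (t*thr*(n:ℝ) + (n:ℝ)*(t^2*(m:ℝ)*μ/2 - t*μ)) := by
          rw [← Real.exp_add]
      _ ≤ (M:ℝ)^n * Real.exp (-((m:ℝ)+1)) := by
          refine mul_le_mul_of_nonneg_left (Real.exp_le_exp.mpr hexp_bound) (by positivity)
  -- the good-profile predicate
  set p : (Fin n → (C ≃ Fin m)) → Prop := fun R =>
    ∀ (T : Finset C) (hTne : T.Nonempty), T.card = k →
      thr < (∑ i : Fin n, ((T.inf' hTne (fun c => (R i c : ℕ) + 1) : ℕ) : ℝ)) / (n : ℝ) with hp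
  -- union bound
  have hbadsub : (univ.filter fun R : Fin n → C ≃ Fin m => ¬ p R)
      ⊆ ((univ : Finset C).powersetCard k).biUnion (fun T => univ.filter fun R : Fin n → C ≃ Fin m =>
          (∑ i : Fin n, (X T (R i) : ℝ)) ≤ thr * n) := by
    intro R hR
    rw [mem_filter] at hR
    obtain ⟨-, hR⟩ := hR
    simp only [hp] at hR
    push_neg at hR
    obtain ⟨T, hTne, hTk2, hle⟩ := hR
    rw [mem_biUnion]
    refine ⟨T, ?_, ?_⟩
    · rw [mem_powersetCard]; exact ⟨subset_univ T, hTk2⟩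
    · rw [mem_filter]
      refine ⟨mem_univ _, ?_⟩
      have hXeq : ∀ i : Fin n,
          (X T (R i) : ℝ) = ((T.inf' hTne (fun c => ((R i) c : ℕ) + 1) : ℕ) : ℝ) := by
        intro i
        rw [hXdef]
        simp only [dif_pos hTne]
      rw [Finset.sum_congr rfl fun i _ => hXeq i]
      rw [div_le_iff₀ hnR] at hle
      exact hle
  have hchoose : ((m.choose k : ℕ) : ℝ) ≤ (2:ℝ)^m := by
    have h1 : m.choose k ≤ 2^m := by
      have h2 := Finset.single_le_sum (f := fun i => m.choose i)
        (fun i _ => Nat.zero_le _) (Finset.mem_range.mpr (by omega : k < m + 1))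
      rwa [Nat.sum_range_choose] at h2
    exact_mod_cast h1
  have hhalf : (2:ℝ)^m * Real.exp (-((m:ℝ)+1)) < 1/2 := by
    have h2e : (2:ℝ) < Real.exp 1 := lt_trans (by norm_num) Real.exp_one_gt_d9
    have hpow : (2:ℝ)^(m+1) < Real.exp 1 ^ (m+1) :=
      pow_lt_pow_left₀ h2e (by norm_num) (by omega)
    have hexp : Real.exp (-((m:ℝ)+1)) = 1 / Real.exp 1 ^ (m+1) := by
      rw [Real.exp_neg, ← Real.exp_nat_mul]
      push_cast
      rw [mul_one, one_div]
    rw [hexp, mul_one_div, div_lt_div_iff₀ (by positivity) (by norm_num : (0:ℝ) < 2)]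
    calc (2:ℝ)^m * 2 = 2^(m+1) := by ring
      _ < Real.exp 1 ^ (m+1) := hpow
      _ = 1 * Real.exp 1 ^ (m+1) := (one_mul _).symm
  have hBadcard : (((univ.filter fun R : Fin n → C ≃ Fin m => ¬ p R).card : ℕ) : ℝ)
      < (M:ℝ)^n / 2 := by
    have h3 : (univ.filter fun R : Fin n → C ≃ Fin m => ¬ p R).card
        ≤ ∑ T ∈ (univ : Finset C).powersetCard k, (univ.filter fun R : Fin n → C ≃ Fin m =>
            (∑ i : Fin n, (X T (R i) : ℝ)) ≤ thr * n).card :=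
      le_trans (Finset.card_le_card hbadsub) (Finset.card_biUnion_le)
    have h4 : (((univ.filter fun R : Fin n → C ≃ Fin m => ¬ p R).card : ℕ) : ℝ)
        ≤ ∑ T ∈ (univ : Finset C).powersetCard k, (((univ.filter fun R : Fin n → C ≃ Fin m =>
            (∑ i : Fin n, (X T (R i) : ℝ)) ≤ thr * n).card : ℕ) : ℝ) := by
      calc (((univ.filter fun R : Fin n → C ≃ Fin m => ¬ p R).card : ℕ) : ℝ)
          ≤ ((∑ T ∈ (univ : Finset C).powersetCard k, (univ.filter fun R : Fin n → C ≃ Fin m =>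
              (∑ i : Fin n, (X T (R i) : ℝ)) ≤ thr * n).card : ℕ) : ℝ) := Nat.cast_le.mpr h3
        _ = _ := Nat.cast_sum _ _
    have h5 : ∑ T ∈ (univ : Finset C).powersetCard k, (((univ.filter fun R : Fin n → C ≃ Fin m =>
            (∑ i : Fin n, (X T (R i) : ℝ)) ≤ thr * n).card : ℕ) : ℝ)
        ≤ ∑ T ∈ (univ : Finset C).powersetCard k, ((M:ℝ)^n * Real.exp (-((m:ℝ)+1))) := by
      refine Finset.sum_le_sum fun T hT => ?_
      exact key T (Finset.mem_powersetCard.mp hT).2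
    have h6 : ∑ T ∈ (univ : Finset C).powersetCard k, ((M:ℝ)^n * Real.exp (-((m:ℝ)+1)))
        = ((m.choose k : ℕ) : ℝ) * ((M:ℝ)^n * Real.exp (-((m:ℝ)+1))) := by
      rw [Finset.sum_const, Finset.card_powersetCard, Finset.card_univ, hm, nsmul_eq_mul]
    have h7 : ((m.choose k : ℕ) : ℝ) * ((M:ℝ)^n * Real.exp (-((m:ℝ)+1)))
        ≤ (M:ℝ)^n * ((2:ℝ)^m * Real.exp (-((m:ℝ)+1))) := by
      have := mul_le_mul_of_nonneg_right hchoose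
        (by positivity : (0:ℝ) ≤ (M:ℝ)^n * Real.exp (-((m:ℝ)+1)))
      calc ((m.choose k : ℕ) : ℝ) * ((M:ℝ)^n * Real.exp (-((m:ℝ)+1)))
          ≤ (2:ℝ)^m * ((M:ℝ)^n * Real.exp (-((m:ℝ)+1))) := this
        _ = (M:ℝ)^n * ((2:ℝ)^m * Real.exp (-((m:ℝ)+1))) := by ring
    have h8 : (M:ℝ)^n * ((2:ℝ)^m * Real.exp (-((m:ℝ)+1))) < (M:ℝ)^n * (1/2) := by
      exact mul_lt_mul_of_pos_left hhalf (by positivity)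
    calc (((univ.filter fun R : Fin n → C ≃ Fin m => ¬ p R).card : ℕ) : ℝ)
        ≤ _ := h4
      _ ≤ _ := h5
      _ = _ := h6
      _ ≤ _ := h7
      _ < (M:ℝ)^n * (1/2) := h8
      _ = (M:ℝ)^n / 2 := by ring
  -- totals
  have htot : Nat.card (Fin n → (C ≃ Fin m)) = M^n := by
    rw [Nat.card_eq_fintype_card, Fintype.card_fun, hcardEquiv, Fintype.card_fin]
  have huniv : (univ : Finset (Fin n → C ≃ Fin m)).card = M^n := by
    rw [Finset.card_univ, Fintype.card_fun, hcardEquiv, Fintype.card_fin]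
  have hgoodcard : Nat.card {R : Fin n → (C ≃ Fin m) // p R}
      = M^n - (univ.filter fun R : Fin n → C ≃ Fin m => ¬ p R).card := by
    rw [Nat.card_eq_fintype_card, Fintype.card_subtype]
    have h9 : ((univ : Finset (Fin n → C ≃ Fin m)).filter fun x => p x).card
        + ((univ : Finset (Fin n → C ≃ Fin m)).filter fun R => ¬ p R).card = M^n := by
      rw [← huniv]
      exact Finset.card_filter_add_card_filter_not p
    omega
  have hBadle : (univ.filter fun R : Fin n → C ≃ Fin m => ¬ p R).card ≤ M^n := by
    calc (univ.filter fun R : Fin n → C ≃ Fin m => ¬ p R).card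
        ≤ (univ : Finset (Fin n → C ≃ Fin m)).card := Finset.card_filter_le _ _
      _ = M^n := huniv
  show ((Nat.card {R : Fin n → (C ≃ Fin m) // p R} : ℕ) : ℝ)
      / ((Nat.card (Fin n → (C ≃ Fin m)) : ℕ) : ℝ) > 1/2
  rw [hgoodcard, htot]
  have hMn : (0:ℝ) < ((M^n : ℕ) : ℝ) := by
    push_cast
    positivity
  rw [gt_iff_lt, lt_div_iff₀ hMn]
  rw [Nat.cast_sub hBadle]
  push_cast
  linarith [hBadcard]
end
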